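/- arXiv:2312.04039 — 7 statements merged into one kernel-verified Lean document; each statement's English description precedes it below -/
import Mathlib

section
/- Let n ≥ 6, let V = {0,1,…,n−1} with the natural order, and let Q be a partial quasi-pairing of V such that X := ∪Q is a transversal of mc(underline(n)) and Q is an irreducible quasi-pairing of X. Let M be a nontrivial module of T := Inv(underline(n), Q), and write m^- := min(M), m^+ := max(M). Then for every α ∈ (V ∖ M) with m^- ≤ α ≤ m^+ and every β ∈ M with {α, β} ∈ Q, no element of M lies strictly between min(α,β) and max(α,β). -/
open Set

/-- The arc relation of the tournament `Inv(underline(V), P)` obtained from the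
transitive tournament on a linearly ordered type by reversing the arcs `(x,y)`
with `{x,y} ∈ P`. -/
def InvArc {α : Type*} [LinearOrder α] (P : Set (Set α)) (x y : α) : Prop :=
  (x < y ∧ ({x, y} : Set α) ∉ P) ∨ (y < x ∧ ({x, y} : Set α) ∈ P)

/-- `M` is a module of the subtournament of `Inv(·, P)` induced on the vertex set `W`. -/
def IsModuleOn {α : Type*} [LinearOrder α] (P : Set (Set α)) (W M : Set α) : Prop :=
  M ⊆ W ∧ ∀ v ∈ W, v ∉ M →
    (∀ x ∈ M, InvArc P v x) ∨ (∀ x ∈ M, InvArc P x v)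

/-- A subset of the vertex set `W` is trivial if it is empty, a singleton, or all of `W`. -/
def IsTrivialSubset {α : Type*} (W M : Set α) : Prop :=
  M = ∅ ∨ (∃ a, M = {a}) ∨ M = W

/-- A nontrivial module of the tournament `Inv(·, P)` induced on `W`. -/
def IsNontrivialModuleOn {α : Type*} [LinearOrder α] (P : Set (Set α)) (W M : Set α) : Prop :=
  IsModuleOn P W M ∧ ¬ IsTrivialSubset W M

/-- The tournament `Inv(·, P)` induced on `W` is indecomposable: all its modules are trivial. -/
def IndecomposableOn {α : Type*} [LinearOrder α] (P : Set (Set α)) (W : Set α) : Prop :=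
  ∀ M : Set α, IsModuleOn P W M → IsTrivialSubset W M

/-- The tournament `Inv(·, P)` induced on `W` is decomposable: it has a nontrivial module. -/
def DecomposableOn {α : Type*} [LinearOrder α] (P : Set (Set α)) (W : Set α) : Prop :=
  ∃ M : Set α, IsNontrivialModuleOn P W M

/-- A co-module of the tournament `Inv(·, P)` on `W`: a subset `M` of `W` such that
`M` or `W ∖ M` is a nontrivial module. -/
def IsCoModuleOn {α : Type*} [LinearOrder α] (P : Set (Set α)) (W M : Set α) : Prop :=
  M ⊆ W ∧ (IsNontrivialModuleOn P W M ∨ IsNontrivialModuleOn P W (W \ M))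

/-- `mc(underline(W))`: the family of minimal co-modules of the transitive tournament on `W`
(a minimal co-module contains no other co-module). -/
def mcOn {α : Type*} [LinearOrder α] (W : Set α) : Set (Set α) :=
  {M | IsCoModuleOn (∅ : Set (Set α)) W M ∧
    ∀ C : Set α, IsCoModuleOn (∅ : Set (Set α)) W C → C ⊆ M → C = M}

/-- `S` is a transversal of the family `F`: it meets every member of `F`. -/
def TransversalOf {α : Type*} (S : Set α) (F : Set (Set α)) : Prop :=
  ∀ C ∈ F, (S ∩ C).Nonempty

/-- A partial pairing of `V`: a set of pairwise disjoint 2-element subsets of `V`. -/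
def IsPartialPairingOn {α : Type*} (V : Set α) (P : Set (Set α)) : Prop :=
  (∀ B ∈ P, B ⊆ V ∧ B.ncard = 2) ∧
  ∀ B ∈ P, ∀ C ∈ P, B ≠ C → Disjoint B C

/-- `I` is an interval of the totally ordered set `X`: every element of `X ∖ I` is greater
than all elements of `I` or smaller than all of them. -/
def IsIntervalOf {α : Type*} [LinearOrder α] (X I : Set α) : Prop :=
  I ⊆ X ∧ ∀ v ∈ X \ I, (∀ i ∈ I, v < i) ∨ (∀ i ∈ I, i < v)

/-- A nontrivial interval of `X`. -/
def IsNontrivialIntervalOf {α : Type*} [LinearOrder α] (X I : Set α) : Prop :=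
  IsIntervalOf X I ∧ ¬ IsTrivialSubset X I

/-- A family of blocks `P` on the totally ordered set `X` is irreducible if no nontrivial
interval of `X` is a union of blocks of `P`. -/
def IrreducibleOn {α : Type*} [LinearOrder α] (X : Set α) (P : Set (Set α)) : Prop :=
  ∀ R ⊆ P, ¬ IsNontrivialIntervalOf X (⋃₀ R)

/-- A partial quasi-pairing of `V`: a set `Q` of `m+1` two-element subsets of `V` (`m ≥ 1`)
whose union has size `2m+1`. -/
def IsPartialQuasiPairingOn {α : Type*} (V : Set α) (Q : Set (Set α)) : Prop :=
  (∀ B ∈ Q, B ⊆ V ∧ B.ncard = 2) ∧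
  ∃ m : ℕ, 1 ≤ m ∧ (⋃₀ Q).ncard = 2 * m + 1 ∧ Q.ncard = m + 1

/-- The distinguished data of a quasi-pairing `Q`: `vh = v̂_Q` is the element lying in the two
blocks `{vh, vm}` and `{vh, vp}` of `Q`, with `vm = v_Q^- < v_Q^+ = vp`. -/
def QPData {α : Type*} [LinearOrder α] (Q : Set (Set α)) (vh vm vp : α) : Prop :=
  ({vh, vm} : Set α) ∈ Q ∧ ({vh, vp} : Set α) ∈ Q ∧ vm < vp

/-- `Q_part`: the partition of `⋃₀ Q` obtained from `Q` by merging its two intersecting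
blocks into `B_Q = {v̂_Q, v_Q^-, v_Q^+}`. -/
def QPart {α : Type*} [LinearOrder α] (Q : Set (Set α)) (vh vm vp : α) : Set (Set α) :=
  (Q \ {({vh, vm} : Set α), ({vh, vp} : Set α)}) ∪ {({vh, vm, vp} : Set α)}

/-!
Suppose some `x ∈ M` lies strictly between `b` and `a`, say `b < x < a`; the case `a < x < b`
is the same argument in the order dual. The vertex `a ∉ M` sees `b` and `x` from the same side,
so `{a, x} ∈ Q` as well as `{a, b} ∈ Q`. Counting shows that `v̂_Q` is the only vertex in two
blocks of the quasi-pairing, so `a = v̂_Q`, `b = v_Q^-` and `x = v_Q^+`.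

Now `M` lies above `v_Q^-`, and every vertex outside `M` strictly between `v_Q^-` and `max M`
is paired with `v_Q^-` or with `max M`, hence (for vertices other than `v̂_Q`) with `max M`.
So `X ∩ [v_Q^-, max M]` is a union of blocks of `Q_part`, and irreducibility forces it to be all
of `X`. As `X` meets the minimal co-modules `{0}` and `{n - 1}`, the module then spans all of
`V`. Either no vertex outside `M` lies between `v_Q^-` and `v̂_Q`, and `B_Q` is a nontrivial
interval of `X`, or such a vertex `z` exists, is paired with `max M`, and forces
`V ⊆ {v_Q^-, v_Q^+, z, v̂_Q, max M}`, contradicting `n ≥ 6`.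
-/

section OrderDual

variable {α : Type*} [LinearOrder α] {P : Set (Set α)} {W M : Set α}

theorem invArc_dual {x y : α} : InvArc (α := αᵒᵈ) P x y ↔ InvArc P y x := by
  change (y < x ∧ ({x, y} : Set α) ∉ P) ∨ (x < y ∧ ({x, y} : Set α) ∈ P) ↔ _
  rw [InvArc, pair_comm y x, or_comm]

theorem isModuleOn_dual : IsModuleOn (α := αᵒᵈ) P W M ↔ IsModuleOn P W M :=
  and_congr_right fun _ => forall₂_congr fun _ _ => imp_congr_right fun _ => by
    rw [or_comm]
    exact or_congr (forall₂_congr fun _ _ => invArc_dual) (forall₂_congr fun _ _ => invArc_dual)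

theorem isNontrivialModuleOn_dual :
    IsNontrivialModuleOn (α := αᵒᵈ) P W M ↔ IsNontrivialModuleOn P W M :=
  and_congr_left' isModuleOn_dual

theorem isCoModuleOn_dual : IsCoModuleOn (α := αᵒᵈ) P W M ↔ IsCoModuleOn P W M :=
  and_congr_right' (or_congr isNontrivialModuleOn_dual isNontrivialModuleOn_dual)

theorem mcOn_dual : mcOn (α := αᵒᵈ) W = mcOn W := by
  ext C
  exact and_congr (isCoModuleOn_dual (α := α))
    (forall_congr' fun _ => imp_congr_left (isCoModuleOn_dual (α := α)))

theorem isIntervalOf_dual : IsIntervalOf (α := αᵒᵈ) W M ↔ IsIntervalOf W M :=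
  and_congr_right fun _ => forall₂_congr fun _ _ => or_comm

theorem irreducibleOn_dual : IrreducibleOn (α := αᵒᵈ) W P ↔ IrreducibleOn W P :=
  forall₂_congr fun _ _ => not_congr (and_congr_left' isIntervalOf_dual)

theorem qPData_dual {Q : Set (Set α)} {vh vm vp : α} :
    QPData (α := αᵒᵈ) Q vh vp vm ↔ QPData Q vh vm vp := by
  simp only [QPData]; tauto

theorem qPart_comm (Q : Set (Set α)) (vh vm vp : α) : QPart Q vh vp vm = QPart Q vh vm vp := by
  rw [QPart, QPart, pair_comm ({vh, vp} : Set α), pair_comm vp vm]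

end OrderDual

section Tournament

variable {α : Type*} [LinearOrder α] {V M : Set α} {P Q : Set (Set α)}

theorem invArc_iff {e f : α} (hef : e ≠ f) : InvArc P f e ↔ (e < f ↔ ({e, f} : Set α) ∈ P) := by
  rw [InvArc, pair_comm f e]
  rcases hef.lt_or_gt with h | h <;> simp [h, h.not_gt]

theorem invArc_swap_iff {e f : α} (hef : e ≠ f) :
    InvArc P e f ↔ ¬(e < f ↔ ({e, f} : Set α) ∈ P) := by
  rw [InvArc]
  rcases hef.lt_or_gt with h | h <;> simp [h, h.not_gt]

/-- `e < f ↔ {e, f} ∈ P` says that the arc between `e` and `f` points from `f` to `e`, and a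
vertex outside a module points the same way to all of it. -/
theorem IsModuleOn.lt_iff_mem_iff (hM : IsModuleOn P V M) {e f y : α} (hf : f ∈ V) (hfM : f ∉ M)
    (he : e ∈ M) (hy : y ∈ M) :
    (e < f ↔ ({e, f} : Set α) ∈ P) ↔ (y < f ↔ ({y, f} : Set α) ∈ P) := by
  have hef : e ≠ f := ne_of_mem_of_not_mem he hfM
  have hyf : y ≠ f := ne_of_mem_of_not_mem hy hfM
  rcases hM.2 f hf hfM with h | h
  · exact iff_of_true ((invArc_iff hef).1 (h e he)) ((invArc_iff hyf).1 (h y hy))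
  · exact iff_of_false ((invArc_swap_iff hef).1 (h e he)) ((invArc_swap_iff hyf).1 (h y hy))

theorem IsModuleOn.pair_mem_iff (hM : IsModuleOn P V M) {e f y : α} (hf : f ∈ V) (hfM : f ∉ M)
    (he : e ∈ M) (hy : y ∈ M) (hside : e < f ↔ y < f) :
    ({e, f} : Set α) ∈ P ↔ ({y, f} : Set α) ∈ P := by
  have := hM.lt_iff_mem_iff hf hfM he hy
  tauto

theorem IsModuleOn.pair_mem_or_pair_mem (hM : IsModuleOn P V M) {lo hi w : α} (hlo : lo ∈ M)
    (hhi : hi ∈ M) (hw : w ∈ V) (hwM : w ∉ M) (hlo_w : lo < w) (hw_hi : w < hi) :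
    ({lo, w} : Set α) ∈ P ∨ ({hi, w} : Set α) ∈ P := by
  have := hM.lt_iff_mem_iff hw hwM hlo hhi
  simp only [hlo_w, hw_hi.not_gt, true_iff, false_iff] at this
  tauto

end Tournament

section Intervals

variable {α : Type*} [LinearOrder α] {X I : Set α} {P : Set (Set α)}

theorem not_irreducibleOn_of_ordConnected (hPX : ⋃₀ P = X) (hI : I.OrdConnected)
    (hP : ∀ B ∈ P, (B ∩ I).Nonempty → B ⊆ I) (hXI : (X ∩ I).Nontrivial) (hX : ¬X ⊆ I) :
    ¬IrreducibleOn X P := by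
  intro hirr
  have hR : ⋃₀ {B ∈ P | (B ∩ I).Nonempty} = X ∩ I := by
    ext x
    constructor
    · rintro ⟨B, ⟨hBP, hBI⟩, hxB⟩
      exact ⟨hPX ▸ ⟨B, hBP, hxB⟩, hP B hBP hBI hxB⟩
    · rintro ⟨hxX, hxI⟩
      obtain ⟨B, hBP, hxB⟩ := hPX ▸ hxX
      exact ⟨B, ⟨hBP, x, hxB, hxI⟩, hxB⟩
  refine hirr _ (fun B hB => hB.1) ⟨⟨hR ▸ inter_subset_left, fun v hv => ?_⟩, ?_⟩
  · rw [hR] at hv ⊢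
    have hvI : v ∉ I := fun h => hv.2 ⟨hv.1, h⟩
    by_contra! h
    obtain ⟨⟨i, hi, hiv⟩, ⟨j, hj, hvj⟩⟩ := h
    exact hvI (hI.out hi.2 hj.2 ⟨hiv, hvj⟩)
  · rw [hR]
    rintro (h | ⟨a, h⟩ | h)
    · exact hXI.nonempty.ne_empty h
    · exact hXI.not_subsingleton (h ▸ subsingleton_singleton)
    · exact hX (h ▸ inter_subset_right)

end Intervals

section MinimalCoModules

variable {α : Type*} [LinearOrder α] {V : Set α} {s : α}

theorem not_isCoModuleOn_empty : ¬IsCoModuleOn (∅ : Set (Set α)) V ∅ := by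
  rintro ⟨-, h | h⟩
  · exact h.2 (Or.inl rfl)
  · exact h.2 (Or.inr (Or.inr sdiff_empty))

theorem singleton_mem_mcOn_of_isLeast (hs : IsLeast V s) (hV : 3 ≤ V.ncard) :
    ({s} : Set α) ∈ mcOn V := by
  have hrest : 2 ≤ (V \ {s}).ncard := by
    rw [ncard_sdiff_singleton_of_mem hs.1]; omega
  refine ⟨⟨singleton_subset_iff.2 hs.1, Or.inr ⟨⟨sdiff_subset, fun v hv hvs => ?_⟩, ?_⟩⟩, ?_⟩
  · obtain rfl : v = s := by simpa [hv] using hvs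
    exact Or.inl fun x hx => Or.inl ⟨(hs.2 hx.1).lt_of_ne (Ne.symm hx.2), notMem_empty _⟩
  · rintro (h | ⟨a, h⟩ | h)
    · simp [h] at hrest
    · simp [h] at hrest
    · exact (show s ∈ V \ {s} by rw [h]; exact hs.1).2 rfl
  · intro C hC hCs
    rcases subset_singleton_iff_eq.1 hCs with rfl | rfl
    · exact absurd hC not_isCoModuleOn_empty
    · rfl

end MinimalCoModules

section Transversal

variable {α : Type*} [LinearOrder α] {V X : Set α}

theorem TransversalOf.exists_mem_isLeast (h : TransversalOf X (mcOn V)) (hV : V.Finite)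
    (hV3 : 3 ≤ V.ncard) : ∃ s ∈ X, IsLeast V s := by
  obtain ⟨s, hsV, hs⟩ := exists_min_image V id hV (nonempty_of_ncard_ne_zero (by omega))
  obtain ⟨u, huX, rfl⟩ := h {s} (singleton_mem_mcOn_of_isLeast ⟨hsV, hs⟩ hV3)
  exact ⟨u, huX, hsV, hs⟩

theorem TransversalOf.exists_mem_isGreatest (h : TransversalOf X (mcOn V)) (hV : V.Finite)
    (hV3 : 3 ≤ V.ncard) : ∃ t ∈ X, IsGreatest V t :=
  TransversalOf.exists_mem_isLeast (α := αᵒᵈ) (mcOn_dual (α := α) ▸ h) hV hV3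

end Transversal

section QuasiPairing

variable {α : Type*} {V : Set α} {Q : Set (Set α)}

theorem ncard_sUnion_le_two_mul {S : Set (Set α)} (hS : S.Finite) (h : ∀ B ∈ S, B.ncard ≤ 2) :
    (⋃₀ S).ncard ≤ 2 * S.ncard := by
  induction S, hS using Set.Finite.induction_on with
  | empty => simp
  | @insert B S hBS hS ih =>
    rw [sUnion_insert, ncard_insert_of_notMem hBS hS]
    have hB := h B (mem_insert _ _)
    have hS := ih fun C hC => h C (mem_insert_of_mem _ hC)
    have := ncard_union_le B (⋃₀ S)
    omega

namespace IsPartialQuasiPairingOn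

theorem finite (hQ : IsPartialQuasiPairingOn V Q) : Q.Finite := by
  obtain ⟨m, -, -, hcard⟩ := hQ.2
  exact finite_of_ncard_ne_zero (by omega)

theorem sUnion_finite (hQ : IsPartialQuasiPairingOn V Q) : (⋃₀ Q).Finite := by
  obtain ⟨m, -, hcard, -⟩ := hQ.2
  exact finite_of_ncard_ne_zero (by omega)

theorem mem_of_pair_mem (hQ : IsPartialQuasiPairingOn V Q) {a b : α}
    (h : ({a, b} : Set α) ∈ Q) : a ∈ V :=
  (hQ.1 _ h).1 (mem_insert _ _)

theorem ne_of_pair_mem (hQ : IsPartialQuasiPairingOn V Q) {a b : α}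
    (h : ({a, b} : Set α) ∈ Q) : a ≠ b := by
  rintro rfl
  simpa using (hQ.1 _ h).2

theorem eq_pair_of_mem (hQ : IsPartialQuasiPairingOn V Q) {B : Set α} (hB : B ∈ Q) {e f : α}
    (he : e ∈ B) (hf : f ∈ B) (hef : e ≠ f) : B = {e, f} :=
  (eq_of_subset_of_ncard_le (pair_subset he hf) (by rw [(hQ.1 B hB).2, ncard_pair hef])
    (hQ.sUnion_finite.subset (subset_sUnion_of_mem hB))).symm

/-- Since `|⋃₀ Q| = 2|Q| - 1`, removing two blocks that each share a point with the remaining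
blocks would leave at most `2(|Q| - 2) + 2 < |⋃₀ Q|` points. -/
theorem false_of_two_overlaps (hQ : IsPartialQuasiPairingOn V Q) {C D : Set α} (hC : C ∈ Q)
    (hD : D ∈ Q) (hCD : C ≠ D) {c d : α} (hc : c ∈ C) (hc' : c ∈ ⋃₀ (Q \ {C, D}))
    (hd : d ∈ D) (hd' : d ∈ ⋃₀ (Q \ {C, D})) : False := by
  obtain ⟨m, hm, hX, hQm⟩ := hQ.2
  have hcover : ⋃₀ Q ⊆ ⋃₀ (Q \ {C, D}) ∪ (C \ {c}) ∪ (D \ {d}) := by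
    rintro y ⟨B, hB, hyB⟩
    by_cases hBCD : B ∈ ({C, D} : Set (Set α))
    · rcases hBCD with rfl | rfl
      · by_cases hyc : y = c
        · exact Or.inl (Or.inl (hyc ▸ hc'))
        · exact Or.inl (Or.inr ⟨hyB, hyc⟩)
      · by_cases hyd : y = d
        · exact Or.inl (Or.inl (hyd ▸ hd'))
        · exact Or.inr ⟨hyB, hyd⟩
    · exact Or.inl (Or.inl ⟨B, ⟨hB, hBCD⟩, hyB⟩)
  have hrest : (Q \ {C, D}).ncard = Q.ncard - 2 := by
    rw [ncard_sdiff' (pair_subset hC hD) hQ.finite, ncard_pair hCD]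
  have hrest_le : (⋃₀ (Q \ {C, D})).ncard ≤ 2 * (Q \ {C, D}).ncard :=
    ncard_sUnion_le_two_mul (hQ.finite.subset sdiff_subset) fun B hB => (hQ.1 B hB.1).2.le
  have hfin : (⋃₀ (Q \ {C, D}) ∪ (C \ {c}) ∪ (D \ {d})).Finite :=
    hQ.sUnion_finite.subset (union_subset (union_subset (sUnion_mono sdiff_subset)
      (sdiff_subset.trans (subset_sUnion_of_mem hC)))
      (sdiff_subset.trans (subset_sUnion_of_mem hD)))
  have hle := ncard_le_ncard hcover hfin
  have h1 := ncard_union_le (⋃₀ (Q \ {C, D}) ∪ (C \ {c})) (D \ {d})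
  have h2 := ncard_union_le (⋃₀ (Q \ {C, D})) (C \ {c})
  rw [ncard_sdiff_singleton_of_mem hc, (hQ.1 C hC).2] at h2
  rw [ncard_sdiff_singleton_of_mem hd, (hQ.1 D hD).2] at h1
  omega

end IsPartialQuasiPairingOn

end QuasiPairing

namespace QPData

variable {α : Type*} [LinearOrder α] {V M : Set α} {Q : Set (Set α)} {vh vm vp : α}

theorem vh_ne_vm (hQ : IsPartialQuasiPairingOn V Q) (hdata : QPData Q vh vm vp) : vh ≠ vm :=
  hQ.ne_of_pair_mem hdata.1

theorem vh_ne_vp (hQ : IsPartialQuasiPairingOn V Q) (hdata : QPData Q vh vm vp) : vh ≠ vp :=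
  hQ.ne_of_pair_mem hdata.2.1

theorem pair_vm_ne_pair_vp (hQ : IsPartialQuasiPairingOn V Q) (hdata : QPData Q vh vm vp) :
    ({vh, vm} : Set α) ≠ {vh, vp} := by
  rw [Ne, pair_eq_pair_iff]
  have := hdata.vh_ne_vm hQ
  have := hdata.2.2.ne
  tauto

theorem eq_or_eq_of_vh_mem (hQ : IsPartialQuasiPairingOn V Q) (hdata : QPData Q vh vm vp)
    {B : Set α} (hB : B ∈ Q) (hvh : vh ∈ B) : B = {vh, vm} ∨ B = {vh, vp} := by
  by_contra! hne
  have hvp_rest : ({vh, vp} : Set α) ∈ Q \ {B, {vh, vm}} :=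
    ⟨hdata.2.1, by rintro (h | h); exacts [hne.2 h.symm, hdata.pair_vm_ne_pair_vp hQ h.symm]⟩
  exact hQ.false_of_two_overlaps hB hdata.1 hne.1 hvh ⟨_, hvp_rest, mem_insert _ _⟩
    (mem_insert _ _) ⟨_, hvp_rest, mem_insert _ _⟩

theorem eq_of_mem_of_mem (hQ : IsPartialQuasiPairingOn V Q) (hdata : QPData Q vh vm vp)
    {B C : Set α} (hB : B ∈ Q) (hC : C ∈ Q) {x : α} (hxB : x ∈ B) (hxC : x ∈ C) (hx : x ≠ vh) :
    B = C := by
  by_contra hBC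
  have key : ∀ {B C : Set α}, B ∈ Q → C ∈ Q → x ∈ B → x ∈ C → B ≠ C →
      C ≠ {vh, vm} → C ≠ {vh, vp} → False := by
    intro B C hB hC hxB hxC hBC hC1 hC2
    -- remove `C` and a block through `vh` other than `B`; both still meet the remaining blocks
    by_cases hB1 : B = {vh, vm}
    · subst hB1
      have hrest : ({vh, vm} : Set α) ∈ Q \ {C, {vh, vp}} :=
        ⟨hB, by rintro (h | h); exacts [hBC h, hdata.pair_vm_ne_pair_vp hQ h]⟩
      exact hQ.false_of_two_overlaps hC hdata.2.1 hC2 hxC ⟨_, hrest, hxB⟩ (mem_insert _ _)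
        ⟨_, hrest, mem_insert _ _⟩
    · have hrest : B ∈ Q \ {C, {vh, vm}} := ⟨hB, by rintro (h | h); exacts [hBC h, hB1 h]⟩
      have hvp_rest : ({vh, vp} : Set α) ∈ Q \ {C, {vh, vm}} :=
        ⟨hdata.2.1, by rintro (h | h); exacts [hC2 h.symm, hdata.pair_vm_ne_pair_vp hQ h.symm]⟩
      exact hQ.false_of_two_overlaps hC hdata.1 hC1 hxC ⟨_, hrest, hxB⟩ (mem_insert _ _)
        ⟨_, hvp_rest, mem_insert _ _⟩
  by_cases hC' : C = {vh, vm} ∨ C = {vh, vp}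
  · by_cases hB' : B = {vh, vm} ∨ B = {vh, vp}
    · have := hdata.2.2.ne
      rcases hB' with rfl | rfl <;> rcases hC' with rfl | rfl <;> simp_all
    · rw [not_or] at hB'
      exact key hC hB hxC hxB (Ne.symm hBC) hB'.1 hB'.2
  · rw [not_or] at hC'
    exact key hB hC hxB hxC hBC hC'.1 hC'.2

theorem eq_of_pair_mem_of_pair_mem (hQ : IsPartialQuasiPairingOn V Q) (hdata : QPData Q vh vm vp)
    {x y z : α} (hy : ({x, y} : Set α) ∈ Q) (hz : ({x, z} : Set α) ∈ Q) (hx : x ≠ vh) : y = z := by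
  have h := hdata.eq_of_mem_of_mem hQ hy hz (mem_insert _ _) (mem_insert _ _) hx
  rw [pair_eq_pair_iff] at h
  have := hQ.ne_of_pair_mem hy
  tauto

theorem eq_vm_or_eq_vp (hQ : IsPartialQuasiPairingOn V Q) (hdata : QPData Q vh vm vp) {y : α}
    (hy : ({vh, y} : Set α) ∈ Q) : y = vm ∨ y = vp := by
  have := hdata.vh_ne_vm hQ
  have := hdata.vh_ne_vp hQ
  rcases hdata.eq_or_eq_of_vh_mem hQ hy (mem_insert _ _) with h | h <;>
    rw [pair_eq_pair_iff] at h <;> tauto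

theorem notMem_of_mem (hQ : IsPartialQuasiPairingOn V Q) (hdata : QPData Q vh vm vp)
    {B : Set α} (hB : B ∈ Q) (hB1 : B ≠ {vh, vm}) (hB2 : B ≠ {vh, vp}) {x : α} (hx : x ∈ B) :
    x ∉ ({vh, vm, vp} : Set α) := by
  rintro (rfl | rfl | rfl)
  · exact (hdata.eq_or_eq_of_vh_mem hQ hB hx).elim hB1 hB2
  · exact hB1 (hdata.eq_of_mem_of_mem hQ hB hdata.1 hx (mem_insert_of_mem _ rfl)
      (hdata.vh_ne_vm hQ).symm)
  · exact hB2 (hdata.eq_of_mem_of_mem hQ hB hdata.2.1 hx (mem_insert_of_mem _ rfl)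
      (hdata.vh_ne_vp hQ).symm)

theorem sUnion_qPart (hdata : QPData Q vh vm vp) : ⋃₀ QPart Q vh vm vp = ⋃₀ Q := by
  ext x
  constructor
  · rintro ⟨B, ⟨hB, -⟩ | rfl, hxB⟩
    · exact ⟨B, hB, hxB⟩
    · rcases hxB with rfl | rfl | rfl
      exacts [⟨_, hdata.1, mem_insert _ _⟩, ⟨_, hdata.1, mem_insert_of_mem _ rfl⟩,
        ⟨_, hdata.2.1, mem_insert_of_mem _ rfl⟩]
  · rintro ⟨B, hB, hxB⟩
    by_cases hB' : B ∈ ({{vh, vm}, {vh, vp}} : Set (Set α))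
    · refine ⟨{vh, vm, vp}, Or.inr rfl, ?_⟩
      rcases hB' with rfl | rfl <;> rcases hxB with rfl | rfl <;> simp
    · exact ⟨B, Or.inl ⟨hB, hB'⟩, hxB⟩

theorem not_irreducibleOn_qPart (hdata : QPData Q vh vm vp) {I : Set α} (hI : I.OrdConnected)
    (hBQ : ({vh, vm, vp} : Set α) ⊆ I)
    (hblocks : ∀ B ∈ Q, B ≠ {vh, vm} → B ≠ {vh, vp} → ∀ e ∈ B, e ∈ I → B ⊆ I)
    (hX : ¬⋃₀ Q ⊆ I) : ¬IrreducibleOn (⋃₀ Q) (QPart Q vh vm vp) := by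
  refine not_irreducibleOn_of_ordConnected hdata.sUnion_qPart hI ?_ ?_ hX
  · rintro B (⟨hB, hB'⟩ | rfl) ⟨e, heB, heI⟩
    · simp only [mem_insert_iff, mem_singleton_iff, not_or] at hB'
      exact hblocks B hB hB'.1 hB'.2 e heB heI
    · exact hBQ
  · exact ⟨vm, ⟨⟨_, hdata.1, mem_insert_of_mem _ rfl⟩, hBQ (by simp)⟩,
      vp, ⟨⟨_, hdata.2.1, mem_insert_of_mem _ rfl⟩, hBQ (by simp)⟩, hdata.2.2.ne⟩

theorem subset_Icc_of_mem (hQ : IsPartialQuasiPairingOn V Q) (hdata : QPData Q vh vm vp)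
    (hM : IsModuleOn Q V M) {lo hi : α} (hlo : IsLeast M lo) (hhi : IsGreatest M hi)
    (hlo_vh : lo < vh) (hvh_hi : vh < hi) {B : Set α} (hB : B ∈ Q) {e : α} (heB : e ∈ B)
    (he : e ∈ Icc lo hi) (hevh : e ≠ vh) : B ⊆ Icc lo hi := by
  have hlo_hi : lo ≤ hi := (hlo_vh.trans hvh_hi).le
  intro f hfB
  by_cases hfe : f = e
  · exact hfe ▸ he
  have hef : ({e, f} : Set α) ∈ Q := hQ.eq_pair_of_mem hB heB hfB (Ne.symm hfe) ▸ hB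
  by_cases heM : e ∈ M
  · by_cases hfM : f ∈ M
    · exact ⟨hlo.2 hfM, hhi.2 hfM⟩
    by_contra hfI
    have hfV : f ∈ V := hQ.mem_of_pair_mem (pair_comm e f ▸ hef)
    have hside : ∀ y ∈ Icc lo hi, e < f ↔ y < f := fun y hy => by
      simp only [mem_Icc, not_and_or, not_le] at hfI hy he
      constructor <;> intro <;> rcases hfI with h | h <;> order
    -- so `f` is paired with `lo` and with `hi`, as with `e`, and only `vh` lies in two blocks
    have hlo_f := (hM.pair_mem_iff hfV hfM heM hlo.1 (hside lo ⟨le_rfl, hlo_hi⟩)).1 hef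
    have hhi_f := (hM.pair_mem_iff hfV hfM heM hhi.1 (hside hi ⟨hlo_hi, le_rfl⟩)).1 hef
    have hf_vh : f = vh := by
      by_contra hf_vh
      exact (hlo_vh.trans hvh_hi).ne (hdata.eq_of_pair_mem_of_pair_mem hQ
        (pair_comm lo f ▸ hlo_f) (pair_comm hi f ▸ hhi_f) hf_vh)
    exact hfI (hf_vh ▸ ⟨hlo_vh.le, hvh_hi.le⟩)
  · have hlo_e : lo < e := he.1.lt_of_ne (by rintro rfl; exact heM hlo.1)
    have he_hi : e < hi := he.2.lt_of_ne (by rintro rfl; exact heM hhi.1)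
    rcases hM.pair_mem_or_pair_mem hlo.1 hhi.1 (hQ.mem_of_pair_mem hef) heM hlo_e he_hi with h | h
    · rw [hdata.eq_of_pair_mem_of_pair_mem hQ hef (pair_comm lo e ▸ h) hevh]
      exact ⟨le_rfl, hlo_hi⟩
    · rw [hdata.eq_of_pair_mem_of_pair_mem hQ hef (pair_comm hi e ▸ h) hevh]
      exact ⟨hlo_hi, le_rfl⟩

theorem eq_vm_or_eq_vp_of_lt_vh (hQ : IsPartialQuasiPairingOn V Q) (hdata : QPData Q vh vm vp)
    (hM : IsModuleOn Q V M) (hvm : vm ∈ M) (hvh : vh ∉ M) (hvm_vh : vm < vh) {y : α} (hy : y ∈ M)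
    (hy_vh : y < vh) : y = vm ∨ y = vp := by
  refine hdata.eq_vm_or_eq_vp hQ (pair_comm y vh ▸ ?_)
  exact (hM.pair_mem_iff (hQ.mem_of_pair_mem hdata.1) hvh hvm hy (iff_of_true hvm_vh hy_vh)).1
    (pair_comm vh vm ▸ hdata.1)

/-- Otherwise `B_Q` would be a nontrivial interval of `⋃₀ Q`. -/
theorem exists_notMem_mem_Ioo (hQ : IsPartialQuasiPairingOn V Q) (hdata : QPData Q vh vm vp)
    (hirr : IrreducibleOn (⋃₀ Q) (QPart Q vh vm vp)) (hM : IsModuleOn Q V M) (hvm : vm ∈ M)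
    (hvh : vh ∉ M) (hvp_vh : vp < vh) {t : α} (ht : t ∈ ⋃₀ Q) (hvh_t : vh < t) :
    ∃ z ∈ V, z ∉ M ∧ z ∈ Ioo vm vh := by
  by_contra! hnone
  have hvm_vh : vm < vh := hdata.2.2.trans hvp_vh
  refine hdata.not_irreducibleOn_qPart (I := Icc vm vh) ordConnected_Icc ?_ ?_
    (fun h => (h ht).2.not_gt hvh_t) hirr
  · rintro e (rfl | rfl | rfl)
    exacts [⟨hvm_vh.le, le_rfl⟩, ⟨le_rfl, hvm_vh.le⟩, ⟨hdata.2.2.le, hvp_vh.le⟩]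
  · intro B hB hB1 hB2 e heB heI
    refine absurd ?_ (hdata.notMem_of_mem hQ hB hB1 hB2 heB)
    have heV : e ∈ V := (hQ.1 B hB).1 heB
    rcases heI.2.eq_or_lt with rfl | he_vh
    · exact mem_insert _ _
    by_cases heM : e ∈ M
    · rcases hdata.eq_vm_or_eq_vp_of_lt_vh hQ hM hvm hvh hvm_vh heM he_vh with rfl | rfl <;> simp
    · exact absurd ⟨heI.1.lt_of_ne (by rintro rfl; exact heM hvm), he_vh⟩ (hnone e heV heM)

theorem ncard_le_five (hQ : IsPartialQuasiPairingOn V Q) (hdata : QPData Q vh vm vp)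
    (hM : IsModuleOn Q V M) {mhi z : α} (hVI : V ⊆ Icc vm mhi) (hmhi : IsGreatest M mhi)
    (hvm : vm ∈ M) (hvh : vh ∉ M) (hvp_vh : vp < vh) (hzV : z ∈ V) (hzM : z ∉ M)
    (hz : z ∈ Ioo vm vh) : V.ncard ≤ 5 := by
  have hvm_vh : vm < vh := hdata.2.2.trans hvp_vh
  have hpair : ∀ w ∈ V, w ∉ M → w ≠ vh → ({mhi, w} : Set α) ∈ Q := fun w hw hwM hwvh => by
    have hvm_w := (hVI hw).1.lt_of_ne (by rintro rfl; exact hwM hvm)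
    have hw_mhi := (hVI hw).2.lt_of_ne (by rintro rfl; exact hwM hmhi.1)
    refine (hM.pair_mem_or_pair_mem hvm hmhi.1 hw hwM hvm_w hw_mhi).resolve_left fun h => hwvh ?_
    exact hdata.eq_of_pair_mem_of_pair_mem hQ h (pair_comm vh vm ▸ hdata.1) (hdata.vh_ne_vm hQ).symm
  have hmhi_vh : mhi ≠ vh := ne_of_mem_of_not_mem hmhi.1 hvh
  have hz_pair := hpair z hzV hzM hz.2.ne
  -- every element of `M` above `z` is paired with `z`, like `mhi`
  have habove : ∀ y ∈ M, z < y → y = mhi := fun y hy hzy => by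
    have hside : mhi < z ↔ y < z := iff_of_false (hzy.trans_le (hmhi.2 hy)).not_gt hzy.not_gt
    have hy_pair := (hM.pair_mem_iff hzV hzM hmhi.1 hy hside).1 (pair_comm mhi z ▸ hz_pair)
    exact hdata.eq_of_pair_mem_of_pair_mem hQ (pair_comm y z ▸ hy_pair) (pair_comm mhi z ▸ hz_pair)
      hz.2.ne
  have hsub : V ⊆ (({vm, vp, z, vh, mhi} : Finset α) : Set α) := fun v hv => by
    simp only [Finset.coe_insert, Finset.coe_singleton, mem_insert_iff, mem_singleton_iff]
    by_cases hvM : v ∈ M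
    · rcases lt_or_gt_of_ne (ne_of_mem_of_not_mem hvM hvh) with h | h
      · rcases hdata.eq_vm_or_eq_vp_of_lt_vh hQ hM hvm hvh hvm_vh hvM h with h | h <;> simp [h]
      · simp [habove v hvM (hz.2.trans h)]
    · by_cases hvvh : v = vh
      · simp [hvvh]
      · simp [hdata.eq_of_pair_mem_of_pair_mem hQ (hpair v hv hvM hvvh) hz_pair hmhi_vh]
  exact (ncard_le_ncard hsub (Finset.finite_toSet _)).trans
    ((ncard_coe_finset _).trans_le Finset.card_le_five)

theorem lt_vh_of_isGreatest (hV : V.Finite) (hV6 : 6 ≤ V.ncard)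
    (hQ : IsPartialQuasiPairingOn V Q) (hdata : QPData Q vh vm vp)
    (htrans : TransversalOf (⋃₀ Q) (mcOn V)) (hirr : IrreducibleOn (⋃₀ Q) (QPart Q vh vm vp))
    (hM : IsModuleOn Q V M) {mhi : α} (hmhi : IsGreatest M mhi) (hvm : vm ∈ M) (hvp : vp ∈ M)
    (hvh : vh ∉ M) (hvp_vh : vp < vh) : mhi < vh := by
  by_contra! hle
  have hvh_mhi : vh < mhi := hle.lt_of_ne (by rintro rfl; exact hvh hmhi.1)
  have hvm_vh : vm < vh := hdata.2.2.trans hvp_vh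
  have hvm_least : IsLeast M vm := ⟨hvm, fun y hy => by
    rcases lt_or_ge y vh with h | h
    · rcases hdata.eq_vm_or_eq_vp_of_lt_vh hQ hM hvm hvh hvm_vh hy h with rfl | rfl
      exacts [le_rfl, hdata.2.2.le]
    · exact hvm_vh.le.trans h⟩
  obtain ⟨s, hsX, hs⟩ := htrans.exists_mem_isLeast hV (by omega)
  obtain ⟨t, htX, ht⟩ := htrans.exists_mem_isGreatest hV (by omega)
  have hmhi_t : mhi ≤ t := ht.2 (hM.1 hmhi.1)
  by_cases hX : ⋃₀ Q ⊆ Icc vm mhi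
  · have hVI : V ⊆ Icc vm mhi := fun v hv =>
      ⟨(hX hsX).1.trans (hs.2 hv), (ht.2 hv).trans (hX htX).2⟩
    obtain ⟨z, hzV, hzM, hz⟩ :=
      hdata.exists_notMem_mem_Ioo hQ hirr hM hvm hvh hvp_vh htX (hvh_mhi.trans_le hmhi_t)
    have := hdata.ncard_le_five hQ hM hVI hmhi hvm hvh hvp_vh hzV hzM hz
    omega
  · -- `⋃₀ Q ∩ [vm, mhi]` is a union of blocks of `QPart Q vh vm vp`
    refine hdata.not_irreducibleOn_qPart ordConnected_Icc ?_ ?_ hX hirr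
    · rintro e (rfl | rfl | rfl)
      exacts [⟨hvm_vh.le, hvh_mhi.le⟩, ⟨le_rfl, hvm_least.2 hmhi.1⟩, ⟨hvm_least.2 hvp, hmhi.2 hvp⟩]
    · intro B hB hB1 hB2 e heB heI
      exact hdata.subset_Icc_of_mem hQ hM hvm_least hmhi hvm_vh hvh_mhi hB heB heI
        fun h => hdata.notMem_of_mem hQ hB hB1 hB2 heB (h ▸ mem_insert _ _)

theorem notMem_Ioo_of_pair_mem (hV : V.Finite) (hV6 : 6 ≤ V.ncard)
    (hQ : IsPartialQuasiPairingOn V Q) (hdata : QPData Q vh vm vp)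
    (htrans : TransversalOf (⋃₀ Q) (mcOn V)) (hirr : IrreducibleOn (⋃₀ Q) (QPart Q vh vm vp))
    (hM : IsModuleOn Q V M) {mhi a b x : α} (hmhi : IsGreatest M mhi) (haM : a ∉ M)
    (ha_mhi : a ≤ mhi) (hb : b ∈ M) (hab : ({a, b} : Set α) ∈ Q) (hx : x ∈ M) :
    x ∉ Ioo b a := by
  rintro ⟨hbx, hxa⟩
  have hxa_pair : ({x, a} : Set α) ∈ Q :=
    (hM.pair_mem_iff (hQ.mem_of_pair_mem hab) haM hb hx (iff_of_true (hbx.trans hxa) hxa)).1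
      (pair_comm a b ▸ hab)
  -- `a` lies in the two blocks `{a, b}` and `{a, x}`, so it is `vh`
  obtain rfl : a = vh := by
    by_contra h
    exact hbx.ne (hdata.eq_of_pair_mem_of_pair_mem hQ hab (pair_comm x a ▸ hxa_pair) h)
  obtain ⟨rfl, rfl⟩ : b = vm ∧ x = vp := by
    have := hdata.2.2
    rcases hdata.eq_vm_or_eq_vp hQ hab with rfl | rfl <;>
      rcases hdata.eq_vm_or_eq_vp hQ (pair_comm x a ▸ hxa_pair) with rfl | rfl <;>
      first | exact ⟨rfl, rfl⟩ | order
  exact (hdata.lt_vh_of_isGreatest hV hV6 hQ htrans hirr hM hmhi hb hx haM hxa).not_ge ha_mhi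

end QPData

/-- Claim 1. Let `n ≥ 6`, `V = {0, …, n−1}`, `Q` a partial
quasi-pairing of `V` with distinguished data `(vh, vm, vp)` such that `⋃₀ Q` is a
transversal of `mc(underline(n))` and `Q` is irreducible, and let `M` be a nontrivial
module of `T := Inv(underline(n), Q)` with minimum `mlo` and maximum `mhi`. Then for every
`α ∈ V ∖ M` with `mlo ≤ α ≤ mhi` and every `β ∈ M` with `{α, β} ∈ Q`, no element of `M`
lies strictly between `min(α, β)` and `max(α, β)`. -/
theorem stmt_9 (n : ℕ) (hn : 6 ≤ n) (Q : Set (Set ℕ))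
    (hQ : IsPartialQuasiPairingOn (Set.Iio n) Q)
    (vh vm vp : ℕ) (hdata : QPData Q vh vm vp)
    (htrans : TransversalOf (⋃₀ Q) (mcOn (Set.Iio n)))
    (hirr : IrreducibleOn (⋃₀ Q) (QPart Q vh vm vp))
    (M : Set ℕ) (hM : IsNontrivialModuleOn Q (Set.Iio n) M)
    (mlo mhi : ℕ) (hlo : IsLeast M mlo) (hhi : IsGreatest M mhi) :
    ∀ a ∈ Set.Iio n \ M, mlo ≤ a → a ≤ mhi →
      ∀ b ∈ M, ({a, b} : Set ℕ) ∈ Q →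
        ∀ x ∈ M, ¬ (min a b < x ∧ x < max a b) := by
  rintro a ⟨-, haM⟩ hlo_a ha_hi b hb hab x hx ⟨hx_min, hx_max⟩
  have hV6 : 6 ≤ (Iio n).ncard := (ncard_Iio_nat n).symm ▸ hn
  rcases lt_or_gt_of_ne (ne_of_mem_of_not_mem hb haM).symm with h | h
  · -- the mirror image of the other case, read in the order dual
    rw [min_eq_left h.le, max_eq_right h.le] at *
    exact QPData.notMem_Ioo_of_pair_mem (α := ℕᵒᵈ) (finite_Iio n) hV6 hQ
      ((qPData_dual (α := ℕ)).2 hdata) (mcOn_dual (α := ℕ) ▸ htrans)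
      ((irreducibleOn_dual (α := ℕ)).2 (qPart_comm Q vh vm vp ▸ hirr))
      ((isModuleOn_dual (α := ℕ)).2 hM.1) hlo haM hlo_a hb hab hx ⟨hx_max, hx_min⟩
  · rw [min_eq_right h.le, max_eq_left h.le] at *
    exact QPData.notMem_Ioo_of_pair_mem (finite_Iio n) hV6 hQ hdata htrans hirr hM.1 hhi haM ha_hi
      hb hab hx ⟨hx_min, hx_max⟩
end

section
/- Let V be a finite totally ordered set and let P be a partial pairing of V. If the pairing P of the totally ordered set ∪P is reducible (i.e., some nontrivial interval of ∪P is a union of blocks of P), then the tournament Inv(underline(V), P) is decomposable. More precisely, if R is a proper nonempty subset of P such that ∪R is a nontrivial interval of ∪P, then the closed interval [min(∪R), max(∪R)] of V is a nontrivial module of Inv(underline(V), P). -/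
open Set

private theorem stmt_11_aux {α : Type*} [LinearOrder α] (V : Set α)
    (P : Set (Set α)) (hP : IsPartialPairingOn V P)
    (R : Set (Set α)) (hRP : R ⊆ P) (hRne : R ≠ ∅)
    (hInt : IsNontrivialIntervalOf (⋃₀ P) (⋃₀ R))
    (a b : α) (ha : IsLeast (⋃₀ R) a) (hb : IsGreatest (⋃₀ R) b) :
    IsNontrivialModuleOn P V (V ∩ Set.Icc a b) := by
  obtain ⟨hblocks, hdisj⟩ := hP
  have hRUsub : ⋃₀ R ⊆ ⋃₀ P := Set.sUnion_subset_sUnion hRP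
  have hUPV : ⋃₀ P ⊆ V := by
    intro x hx
    obtain ⟨B, hB, hxB⟩ := hx
    exact (hblocks B hB).1 hxB
  have haR : a ∈ ⋃₀ R := ha.1
  have hbR : b ∈ ⋃₀ R := hb.1
  have hab : a ≤ b := ha.2 hbR
  -- every element of ⋃₀P in [a,b] lies in ⋃₀R
  have claim1 : ∀ x ∈ ⋃₀ P, a ≤ x → x ≤ b → x ∈ ⋃₀ R := by
    intro x hxP hax hxb
    by_contra hxR
    rcases hInt.1.2 x ⟨hxP, hxR⟩ with h | h
    · exact absurd (h a haR) (not_lt.2 hax)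
    · exact absurd (h b hbR) (not_lt.2 hxb)
  -- any block of P meeting ⋃₀R lies in R
  have claim2 : ∀ x ∈ ⋃₀ R, ∀ B ∈ P, x ∈ B → B ∈ R := by
    intro x hx B hB hxB
    obtain ⟨C, hCR, hxC⟩ := hx
    rcases eq_or_ne B C with rfl | hne
    · exact hCR
    · exact absurd (Set.not_disjoint_iff.2 ⟨x, hxB, hxC⟩)
        (not_not.2 (hdisj B hB C (hRP hCR) hne))
  -- no block of P crosses the boundary of [a,b]
  have claim3 : ∀ v x : α, x ∈ Set.Icc a b → v ∉ Set.Icc a b →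
      ({v, x} : Set α) ∉ P := by
    intro v x hx hv hmem
    have hxP : x ∈ ⋃₀ P := ⟨{v, x}, hmem, Or.inr rfl⟩
    have hxR : x ∈ ⋃₀ R := claim1 x hxP hx.1 hx.2
    have hBR : ({v, x} : Set α) ∈ R := claim2 x hxR _ hmem (Or.inr rfl)
    have hvR : v ∈ ⋃₀ R := ⟨{v, x}, hBR, Or.inl rfl⟩
    exact hv ⟨ha.2 hvR, hb.2 hvR⟩
  have haneb : a ≠ b := by
    obtain ⟨B, hBR⟩ := Set.nonempty_iff_ne_empty.2 hRne
    obtain ⟨x, y, hxy, hBxy⟩ := Set.ncard_eq_two.1 (hblocks B (hRP hBR)).2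
    have hxR : x ∈ ⋃₀ R := ⟨B, hBR, by rw [hBxy]; exact Or.inl rfl⟩
    have hyR : y ∈ ⋃₀ R := ⟨B, hBR, by rw [hBxy]; exact Or.inr rfl⟩
    intro hab'
    have hx : x = a := le_antisymm (hab' ▸ hb.2 hxR) (ha.2 hxR)
    have hy : y = a := le_antisymm (hab' ▸ hb.2 hyR) (ha.2 hyR)
    exact hxy (hx.trans hy.symm)
  constructor
  · refine ⟨Set.inter_subset_left, ?_⟩
    intro v hvV hvM
    have hvIcc : v ∉ Set.Icc a b := fun h => hvM ⟨hvV, h⟩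
    rcases lt_or_ge v a with hva | hav
    · left
      intro x hx
      exact Or.inl ⟨lt_of_lt_of_le hva hx.2.1, claim3 v x hx.2 hvIcc⟩
    · have hbv : b < v := by
        rcases lt_or_ge b v with h | h
        · exact h
        · exact absurd ⟨hav, h⟩ hvIcc
      right
      intro x hx
      refine Or.inl ⟨lt_of_le_of_lt hx.2.2 hbv, ?_⟩
      rw [Set.pair_comm]
      exact claim3 v x hx.2 hvIcc
  · rintro (hempty | ⟨c, hc⟩ | hall)
    · have : a ∈ V ∩ Set.Icc a b := ⟨hUPV (hRUsub haR), le_refl a, hab⟩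
      rw [hempty] at this
      exact this
    · have h1 : a ∈ V ∩ Set.Icc a b := ⟨hUPV (hRUsub haR), le_refl a, hab⟩
      have h2 : b ∈ V ∩ Set.Icc a b := ⟨hUPV (hRUsub hbR), hab, le_refl b⟩
      rw [hc] at h1 h2
      exact haneb (h1.trans h2.symm)
    · have hne' : ⋃₀ R ≠ ⋃₀ P := by
        intro h
        exact hInt.2 (Or.inr (Or.inr h))
      obtain ⟨v, hvP, hvR⟩ := Set.exists_of_ssubset ⟨hRUsub, fun h =>
        hne' (Set.Subset.antisymm hRUsub h)⟩
      have hvV : v ∈ V := hUPV hvP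
      have : v ∈ V ∩ Set.Icc a b := by rw [hall]; exact hvV
      rcases hInt.1.2 v ⟨hvP, hvR⟩ with h | h
      · exact absurd (h a haR) (not_lt.2 this.2.1)
      · exact absurd (h b hbR) (not_lt.2 this.2.2)

/-- Let `V` be a finite totally ordered set and `P` a partial pairing
of `V`. If the pairing `P` of `⋃₀ P` is reducible, then `Inv(underline(V), P)` is
decomposable. More precisely, if `R` is a proper nonempty subset of `P` such that `⋃₀ R`
is a nontrivial interval of `⋃₀ P`, then the closed interval
`[min(⋃₀ R), max(⋃₀ R)]` of `V` is a nontrivial module of `Inv(underline(V), P)`. -/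
theorem stmt_11 {α : Type*} [LinearOrder α] (V : Set α) (hVfin : V.Finite)
    (P : Set (Set α)) (hP : IsPartialPairingOn V P) :
    (¬ IrreducibleOn (⋃₀ P) P → DecomposableOn P V) ∧
    (∀ R : Set (Set α), R ⊆ P → R ≠ ∅ → R ≠ P →
      IsNontrivialIntervalOf (⋃₀ P) (⋃₀ R) →
      ∀ a b : α, IsLeast (⋃₀ R) a → IsGreatest (⋃₀ R) b →
        IsNontrivialModuleOn P V (V ∩ Set.Icc a b)) := by
  constructor
  · intro hIrr
    simp only [IrreducibleOn, not_forall] at hIrr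
    obtain ⟨R, hRP, hInt⟩ := hIrr
    rw [not_not] at hInt
    have hRne : R ≠ ∅ := by
      rintro rfl
      exact hInt.2 (Or.inl (by simp))
    have hfin : (⋃₀ R).Finite := hVfin.subset (by
      intro x hx
      obtain ⟨B, hB, hxB⟩ := hx
      exact (hP.1 B (hRP hB)).1 hxB)
    have hne : (⋃₀ R).Nonempty := by
      rw [Set.nonempty_iff_ne_empty]
      intro h
      exact hInt.2 (Or.inl h)
    obtain ⟨a, haR, hamin⟩ := Set.exists_min_image _ id hfin hne
    obtain ⟨b, hbR, hbmax⟩ := Set.exists_max_image _ id hfin hne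
    exact ⟨V ∩ Set.Icc a b,
      stmt_11_aux V P hP R hRP hRne hInt a b ⟨haR, hamin⟩ ⟨hbR, hbmax⟩⟩
  · intro R hRP hRne _ hInt a b ha hb
    exact stmt_11_aux V P hP R hRP hRne hInt a b ha hb
end

section
/- Let V be a finite totally ordered set and let Q be a partial quasi-pairing of V, and set T := Inv(underline(V), Q). If the quasi-pairing Q is reducible (i.e., some nontrivial interval of ∪Q is a union of blocks of the partition Q_part), then the three tournaments T, T − v_Q^-, and T − v_Q^+ are all decomposable. -/
open Set

/-!
The blocks of `Q_part` are pairwise disjoint: with `|Q| = m + 1` there are `m` of them, of total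
size `2m + 1 = |⋃ Q|`. Hence no pair of `Q` leaves a union `I` of blocks of `Q_part`, and if `I` is
a nontrivial interval of `⋃ Q`, its convex hull `J` in `V` is a module of `T` with `J ∩ ⋃ Q = I`.
For `W = V`, `V ∖ {v⁻}`, `V ∖ {v⁺}` the set `J ∩ W` is then a nontrivial module of `T` on `W`:
if `v⁻ ∈ I` the whole block `B_Q` lies in `I`, so `v̂` and `v⁺` remain in `J`; if `v⁻ ∉ I` then
`v̂ ∉ I`, and `v̂` is a vertex outside `J`.
-/

namespace Set

theorem Finite.pairwiseDisjoint_of_finsum_ncard_le {α ι : Type*} {t : Set ι} (ht : t.Finite)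
    {s : ι → Set α} (hs : ∀ i ∈ t, (s i).Finite)
    (h : ∑ᶠ i ∈ t, (s i).ncard ≤ (⋃ i ∈ t, s i).ncard) : t.PairwiseDisjoint s := by
  intro i hi j hj hij
  rw [Function.onFun, Set.disjoint_left]
  intro x hxi hxj
  have hcover : (⋃ k ∈ t, s k) ⊆ (⋃ k ∈ t \ {j}, s k) ∪ (s j \ {x}) := by
    simp only [subset_def, mem_iUnion, mem_union, mem_sdiff, mem_singleton_iff]
    rintro y ⟨k, hk, hyk⟩
    by_cases hkj : k = j
    · subst hkj
      by_cases hyx : y = x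
      · exact .inl ⟨i, ⟨hi, hij⟩, hyx ▸ hxi⟩
      · exact .inr ⟨hyk, hyx⟩
    · exact .inl ⟨k, ⟨hk, hkj⟩, hyk⟩
  have hle := (ncard_le_ncard hcover ((ht.sdiff.biUnion fun k hk => hs k hk.1).union
    ((hs j hj).sdiff))).trans (ncard_union_le _ _)
  have hrest := (ht.sdiff (t := {j})).ncard_biUnion_le s
  have hsplit := finsum_mem_add_sdiff (f := fun k => (s k).ncard) (singleton_subset_iff.2 hj) ht
  have hpos : 0 < (s j).ncard := (ncard_pos (hs j hj)).2 ⟨x, hxj⟩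
  rw [finsum_mem_singleton] at hsplit
  rw [ncard_sdiff_singleton_of_mem hxj] at hle
  omega

end Set

theorem not_isTrivialSubset_iff {α : Type*} {W M : Set α} (hMW : M ⊆ W) :
    ¬ IsTrivialSubset W M ↔ M.Nontrivial ∧ (W \ M).Nonempty := by
  have hMW' : M = W ↔ W ⊆ M := ⟨fun h => h.ge, hMW.antisymm⟩
  rw [IsTrivialSubset, ← Set.not_subsingleton_iff, Set.sdiff_nonempty,
    Set.subsingleton_iff_eq_empty_or_singleton, hMW']
  tauto

section Intervals

variable {α : Type*} [LinearOrder α]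

theorem IsIntervalOf.exists_isIntervalOf_inter_eq {V X I : Set α} (hXV : X ⊆ V)
    (hI : IsIntervalOf X I) : ∃ J, IsIntervalOf V J ∧ J ∩ X = I := by
  refine ⟨V ∩ (upperClosure I ∩ lowerClosure I), ⟨Set.inter_subset_left, ?_⟩, ?_⟩
  · rintro v ⟨hv, hvJ⟩
    simp only [Set.mem_inter_iff, SetLike.mem_coe, mem_upperClosure, mem_lowerClosure,
      not_and, hv, true_implies, not_exists] at hvJ ⊢
    by_cases hbelow : ∃ a ∈ I, a ≤ v
    · right
      rintro z ⟨-, -, b, hb, hzb⟩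
      exact hzb.trans_lt (lt_of_not_ge (hvJ hbelow b hb))
    · left
      push Not at hbelow
      rintro z ⟨-, ⟨a, ha, haz⟩, -⟩
      exact (hbelow a ha).trans_le haz
  · ext z
    simp only [Set.mem_inter_iff, SetLike.mem_coe, mem_upperClosure, mem_lowerClosure]
    constructor
    · rintro ⟨⟨-, ⟨a, ha, haz⟩, b, hb, hzb⟩, hzX⟩
      by_contra hzI
      rcases hI.2 z ⟨hzX, hzI⟩ with h | h
      · exact (h a ha).not_ge haz
      · exact (h b hb).not_ge hzb
    · intro hz
      exact ⟨⟨hXV (hI.1 hz), ⟨z, hz, le_rfl⟩, z, hz, le_rfl⟩, hI.1 hz⟩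

theorem IsIntervalOf.isModuleOn_inter {P : Set (Set α)} {V J W : Set α}
    (hJ : IsIntervalOf V J) (hP : ∀ v ∈ V, ∀ z ∈ J, ({v, z} : Set α) ∈ P → v ∈ J)
    (hWV : W ⊆ V) : IsModuleOn P W (J ∩ W) := by
  refine ⟨Set.inter_subset_right, fun v hvW hvJW => ?_⟩
  have hvJ : v ∉ J := fun h => hvJW ⟨h, hvW⟩
  have hnot : ∀ z ∈ J ∩ W, ({v, z} : Set α) ∉ P := fun z hz h => hvJ (hP v (hWV hvW) z hz.1 h)
  rcases hJ.2 v ⟨hWV hvW, hvJ⟩ with h | h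
  · exact .inl fun z hz => .inl ⟨h z hz.1, hnot z hz⟩
  · exact .inr fun z hz => .inl ⟨h z hz.1, Set.pair_comm v z ▸ hnot z hz⟩

end Intervals

section Decomposable

variable {α : Type*} [LinearOrder α] {P : Set (Set α)} {V I : Set α}

theorem decomposableOn_of_isIntervalOf_sUnion (hPV : ⋃₀ P ⊆ V) (hI : IsIntervalOf (⋃₀ P) I)
    (hsat : ∀ B ∈ P, ∀ x ∈ B, x ∈ I → B ⊆ I) {W : Set α} (hWV : W ⊆ V)
    (hIW : (I ∩ W).Nontrivial) (hout : ((⋃₀ P \ I) ∩ W).Nonempty) : DecomposableOn P W := by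
  obtain ⟨J, hJ, hJI⟩ := hI.exists_isIntervalOf_inter_eq hPV
  have hIJ : I ⊆ J := hJI ▸ Set.inter_subset_left
  have hcross : ∀ v ∈ V, ∀ z ∈ J, ({v, z} : Set α) ∈ P → v ∈ J := by
    intro v _ z hz hvz
    have hzI : z ∈ I := hJI ▸ ⟨hz, Set.mem_sUnion_of_mem (by simp) hvz⟩
    exact hIJ (hsat _ hvz z (by simp) hzI (by simp))
  obtain ⟨y, ⟨hyP, hyI⟩, hyW⟩ := hout
  refine ⟨J ∩ W, hJ.isModuleOn_inter hcross hWV,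
    (not_isTrivialSubset_iff Set.inter_subset_right).2 ⟨hIW.mono ?_, y, hyW, ?_⟩⟩
  · exact Set.inter_subset_inter_left W hIJ
  · exact fun hyJ => hyI (hJI ▸ ⟨hyJ.1, hyP⟩)

theorem decomposableOn_sdiff_singleton_of_isIntervalOf_sUnion (hPV : ⋃₀ P ⊆ V)
    (hI : IsIntervalOf (⋃₀ P) I) (hsat : ∀ B ∈ P, ∀ x ∈ B, x ∈ I → B ⊆ I)
    (hInt : I.Nontrivial) (hout : (⋃₀ P \ I).Nonempty) {u w w' : α}
    (huw : ({u, w} : Set α) ∈ P) (huw' : ({u, w'} : Set α) ∈ P)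
    (hu : u ≠ w) (hu' : u ≠ w') (hw : w ≠ w') : DecomposableOn P (V \ {w}) := by
  have hIV : I ⊆ V := hI.1.trans hPV
  have hdecomp := decomposableOn_of_isIntervalOf_sUnion hPV hI hsat (Set.sdiff_subset (t := {w}))
  by_cases hwI : w ∈ I
  · have hpair : ({u, w} : Set α) ⊆ I := hsat _ huw w (by simp) hwI
    have hpair' : ({u, w'} : Set α) ⊆ I := hsat _ huw' u (by simp) (hpair (by simp))
    obtain ⟨y, hyP, hyI⟩ := hout
    exact hdecomp ⟨u, ⟨hpair' (by simp), hIV (hpair' (by simp)), hu⟩,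
      w', ⟨hpair' (by simp), hIV (hpair' (by simp)), hw.symm⟩, hu'⟩
      ⟨y, ⟨hyP, hyI⟩, hPV hyP, fun hyw => hyI (hyw ▸ hwI)⟩
  · have huI : u ∉ I := fun huI => hwI (hsat _ huw u (by simp) huI (by simp))
    have huP : u ∈ ⋃₀ P := Set.mem_sUnion_of_mem (by simp) huw
    exact hdecomp (hInt.mono fun x hx => ⟨hx, hIV hx, fun hxw => hwI (hxw ▸ hx)⟩)
      ⟨u, ⟨huP, huI⟩, hPV huP, hu⟩

end Decomposable

theorem IsPartialQuasiPairingOn.ne_of_pair_mem_s12 {α : Type*} {V : Set α} {Q : Set (Set α)}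
    (hQ : IsPartialQuasiPairingOn V Q) {x y : α} (h : ({x, y} : Set α) ∈ Q) : x ≠ y := by
  rintro rfl
  simpa using (hQ.1 _ h).2

section QuasiPairing

variable {α : Type*} [LinearOrder α] {V : Set α} {Q : Set (Set α)} {vh vm vp : α}

theorem sUnion_qPart (hdata : QPData Q vh vm vp) : ⋃₀ QPart Q vh vm vp = ⋃₀ Q := by
  have hpair : ({({vh, vm} : Set α), {vh, vp}} : Set (Set α)) ⊆ Q :=
    Set.pair_subset hdata.1 hdata.2.1
  have hB : ({vh, vm} : Set α) ∪ {vh, vp} = {vh, vm, vp} := by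
    ext; simp only [Set.mem_union, Set.mem_insert_iff, Set.mem_singleton_iff]; tauto
  calc ⋃₀ QPart Q vh vm vp
      = ⋃₀ (Q \ {{vh, vm}, {vh, vp}}) ∪ ⋃₀ {({vh, vm} : Set α), {vh, vp}} := by
        rw [QPart, Set.sUnion_union, Set.sUnion_singleton, Set.sUnion_pair, hB]
    _ = ⋃₀ Q := by rw [← Set.sUnion_union, Set.sdiff_union_of_subset hpair]

theorem exists_qPart_superset {B : Set α} (hB : B ∈ Q) :
    ∃ C ∈ QPart Q vh vm vp, B ⊆ C := by
  by_cases hBm : B = {vh, vm} ∨ B = {vh, vp}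
  · refine ⟨{vh, vm, vp}, .inr rfl, ?_⟩
    rcases hBm with rfl | rfl <;> exact Set.insert_subset_insert (by simp)
  · exact ⟨B, .inl ⟨hB, by simpa using hBm⟩, le_rfl⟩

theorem finsum_ncard_qPart (hQ : IsPartialQuasiPairingOn V Q) (hdata : QPData Q vh vm vp) :
    ∑ᶠ B ∈ QPart Q vh vm vp, B.ncard = (⋃₀ Q).ncard := by
  obtain ⟨hm, hp, hmp⟩ := hdata
  have hhm : vh ≠ vm := hQ.ne_of_pair_mem_s12 hm
  have hhp : vh ≠ vp := hQ.ne_of_pair_mem_s12 hp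
  obtain ⟨hblocks, m, -, hunion, hcard⟩ := hQ
  have hQfin : Q.Finite := Set.finite_of_ncard_pos (by omega)
  have hB3 : ({vh, vm, vp} : Set α).ncard = 3 := by
    rw [Set.ncard_insert_of_notMem (by simp [hhm, hhp]), Set.ncard_pair hmp.ne]
  have hB3Q : ({vh, vm, vp} : Set α) ∉ Q \ {{vh, vm}, {vh, vp}} := fun h => by
    simpa [hB3] using (hblocks _ h.1).2
  have hpair : ({vh, vm} : Set α) ≠ {vh, vp} := fun h => by
    have : vm ∈ ({vh, vp} : Set α) := h ▸ by simp
    simp [hhm.symm, hmp.ne] at this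
  have hsumQ : ∑ᶠ B ∈ Q, B.ncard = 2 * Q.ncard := by
    rw [← finsum_one, mul_finsum_mem' _ _ hQfin]
    exact finsum_mem_congr rfl fun B hB => (hblocks B hB).2
  have hsplit := finsum_mem_add_sdiff (f := Set.ncard) (Set.pair_subset hm hp) hQfin
  rw [finsum_mem_pair hpair, (hblocks _ hm).2, (hblocks _ hp).2, hsumQ, hcard] at hsplit
  rw [QPart, Set.union_singleton, finsum_mem_insert _ hB3Q hQfin.sdiff, hB3, hunion]
  omega

theorem pairwiseDisjoint_qPart (hQ : IsPartialQuasiPairingOn V Q) (hdata : QPData Q vh vm vp) :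
    (QPart Q vh vm vp).PairwiseDisjoint id := by
  have hfin : (⋃₀ Q).Finite := by
    obtain ⟨-, m, -, hunion, -⟩ := hQ
    exact Set.finite_of_ncard_pos (by omega)
  refine Set.Finite.pairwiseDisjoint_of_finsum_ncard_le ?_ ?_ ?_
  · exact hfin.finite_subsets.subset fun B hB => sUnion_qPart hdata ▸ Set.subset_sUnion_of_mem hB
  · exact fun B hB => hfin.subset (sUnion_qPart hdata ▸ Set.subset_sUnion_of_mem hB)
  · simpa only [id, ← Set.sUnion_eq_biUnion, sUnion_qPart hdata] using
      (finsum_ncard_qPart hQ hdata).le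

theorem subset_sUnion_of_subset_qPart (hQ : IsPartialQuasiPairingOn V Q)
    (hdata : QPData Q vh vm vp) {R : Set (Set α)} (hR : R ⊆ QPart Q vh vm vp) :
    ∀ B ∈ Q, ∀ x ∈ B, x ∈ ⋃₀ R → B ⊆ ⋃₀ R := by
  rintro B hB x hxB ⟨D, hDR, hxD⟩
  obtain ⟨C, hC, hBC⟩ := exists_qPart_superset (vh := vh) (vm := vm) (vp := vp) hB
  have hCD : C = D := (pairwiseDisjoint_qPart hQ hdata).elim_set hC (hR hDR) x (hBC hxB) hxD
  exact hBC.trans (hCD ▸ Set.subset_sUnion_of_mem hDR)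

end QuasiPairing

theorem stmt_12_general {α : Type*} [LinearOrder α] (V : Set α)
    (Q : Set (Set α)) (hQ : IsPartialQuasiPairingOn V Q)
    (vh vm vp : α) (hdata : QPData Q vh vm vp)
    (hred : ¬ IrreducibleOn (⋃₀ Q) (QPart Q vh vm vp)) :
    DecomposableOn Q V ∧ DecomposableOn Q (V \ {vm}) ∧ DecomposableOn Q (V \ {vp}) := by
  obtain ⟨R, hR, hI, hInt⟩ : ∃ R ⊆ QPart Q vh vm vp, IsNontrivialIntervalOf (⋃₀ Q) (⋃₀ R) := by
    simpa [IrreducibleOn] using hred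
  obtain ⟨hIn, hout⟩ := (not_isTrivialSubset_iff hI.1).1 hInt
  have hsat := subset_sUnion_of_subset_qPart hQ hdata hR
  have hQV : ⋃₀ Q ⊆ V := Set.sUnion_subset fun B hB => (hQ.1 B hB).1
  have hhm : vh ≠ vm := hQ.ne_of_pair_mem_s12 hdata.1
  have hhp : vh ≠ vp := hQ.ne_of_pair_mem_s12 hdata.2.1
  refine ⟨?_, ?_, ?_⟩
  · refine decomposableOn_of_isIntervalOf_sUnion hQV hI hsat subset_rfl ?_ ?_
    · rwa [Set.inter_eq_left.2 (hI.1.trans hQV)]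
    · rwa [Set.inter_eq_left.2 (Set.sdiff_subset.trans hQV)]
  · exact decomposableOn_sdiff_singleton_of_isIntervalOf_sUnion hQV hI hsat hIn hout
      hdata.1 hdata.2.1 hhm hhp hdata.2.2.ne
  · exact decomposableOn_sdiff_singleton_of_isIntervalOf_sUnion hQV hI hsat hIn hout
      hdata.2.1 hdata.1 hhp hhm hdata.2.2.ne'

/-- Let `V` be a finite totally ordered set, `Q` a partial
quasi-pairing of `V` with distinguished data `(vh, vm, vp)`, and
`T := Inv(underline(V), Q)`. If the quasi-pairing `Q` is reducible, then the three
tournaments `T`, `T − v_Q^-`, and `T − v_Q^+` are all decomposable. -/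
theorem stmt_12 {α : Type*} [LinearOrder α] (V : Set α) (hVfin : V.Finite)
    (Q : Set (Set α)) (hQ : IsPartialQuasiPairingOn V Q)
    (vh vm vp : α) (hdata : QPData Q vh vm vp)
    (hred : ¬ IrreducibleOn (⋃₀ Q) (QPart Q vh vm vp)) :
    DecomposableOn Q V ∧ DecomposableOn Q (V \ {vm}) ∧ DecomposableOn Q (V \ {vp}) :=
  stmt_12_general V Q hQ vh vm vp hdata hred
end

section
/- Let n ≥ 5, let V = {0,1,…,n−1} with the natural order, let Q be a partial quasi-pairing of V, and set T := Inv(underline(n), Q). If ∪Q is not a transversal of mc(underline(n)), then the three tournaments T, T − v_Q^-, and T − v_Q^+ are all decomposable. -/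
open Set

lemma invArc_empty_iff {x y : ℕ} : InvArc (∅ : Set (Set ℕ)) x y ↔ x < y := by
  simp [InvArc]

lemma restrictMod {Q : Set (Set ℕ)} {W W' M : Set ℕ}
    (hM : IsModuleOn Q W M) (hW' : W' ⊆ W) : IsModuleOn Q W' (M ∩ W') := by
  refine ⟨Set.inter_subset_right, ?_⟩
  intro v hv hvM
  by_cases hvM' : v ∈ M
  · exact absurd ⟨hvM', hv⟩ hvM
  · rcases hM.2 v (hW' hv) hvM' with h | h
    · exact Or.inl fun x hx => h x hx.1
    · exact Or.inr fun x hx => h x hx.1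

lemma transferMod {Q : Set (Set ℕ)} {n : ℕ} {M : Set ℕ}
    (hM : IsModuleOn (∅ : Set (Set ℕ)) (Set.Iio n) M)
    (hQ : ∀ v x, v ∈ Set.Iio n → v ∉ M → x ∈ M → ({v, x} : Set ℕ) ∉ Q) :
    IsModuleOn Q (Set.Iio n) M := by
  refine ⟨hM.1, ?_⟩
  intro v hv hvM
  rcases hM.2 v hv hvM with h | h
  · exact Or.inl fun x hx => Or.inl ⟨invArc_empty_iff.1 (h x hx), hQ v x hv hvM hx⟩
  · refine Or.inr fun x hx => Or.inl ⟨invArc_empty_iff.1 (h x hx), ?_⟩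
    rw [Set.pair_comm]
    exact hQ v x hv hvM hx

lemma notTrivial {W M : Set ℕ} {a b w : ℕ} (ha : a ∈ M) (hb : b ∈ M) (hab : a ≠ b)
    (hw : w ∈ W) (hwM : w ∉ M) : ¬ IsTrivialSubset W M := by
  rintro (rfl | ⟨c, rfl⟩ | rfl)
  · exact ha
  · exact hab ((Set.mem_singleton_iff.1 ha).trans (Set.mem_singleton_iff.1 hb).symm)
  · exact hwM hw

lemma decompAux {Q : Set (Set ℕ)} {n : ℕ} {W M : Set ℕ} {a b w : ℕ}
    (hW : W ⊆ Set.Iio n) (hM : IsModuleOn Q (Set.Iio n) M)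
    (ha : a ∈ M ∩ W) (hb : b ∈ M ∩ W) (hab : a ≠ b)
    (hw : w ∈ W) (hwM : w ∉ M) : DecomposableOn Q W :=
  ⟨M ∩ W, restrictMod hM hW, notTrivial ha hb hab hw (fun h => hwM h.1)⟩

lemma complMod {n c : ℕ} (hc : c ∈ Set.Iio n) (hor : c = 0 ∨ c = n - 1) :
    IsModuleOn (∅ : Set (Set ℕ)) (Set.Iio n) (Set.Iio n \ {c}) := by
  refine ⟨Set.diff_subset, ?_⟩
  intro v hv hvM
  have hvc : v = c := by
    by_contra h
    exact hvM ⟨hv, h⟩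
  subst hvc
  rcases hor with rfl | rfl
  · refine Or.inl fun x hx => Or.inl ⟨?_, Set.notMem_empty _⟩
    have : x ≠ 0 := by simpa using hx.2
    omega
  · refine Or.inr fun x hx => Or.inl ⟨?_, Set.notMem_empty _⟩
    have h1 : x < n := hx.1
    have h2 : x ≠ n - 1 := by simpa using hx.2
    have h3 : n - 1 < n := hc
    omega

/-- Let `n ≥ 5`, `V = {0, …, n−1}`, `Q` a partial quasi-pairing of `V`
with distinguished data `(vh, vm, vp)`, and `T := Inv(underline(n), Q)`. If `⋃₀ Q` is not
a transversal of `mc(underline(n))`, then the three tournaments `T`, `T − v_Q^-`, and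
`T − v_Q^+` are all decomposable. -/
theorem stmt_13 (n : ℕ) (hn : 5 ≤ n) (Q : Set (Set ℕ))
    (hQ : IsPartialQuasiPairingOn (Set.Iio n) Q)
    (vh vm vp : ℕ) (hdata : QPData Q vh vm vp)
    (htrans : ¬ TransversalOf (⋃₀ Q) (mcOn (Set.Iio n))) :
    DecomposableOn Q (Set.Iio n) ∧ DecomposableOn Q (Set.Iio n \ {vm}) ∧
      DecomposableOn Q (Set.Iio n \ {vp}) := by
  rw [TransversalOf] at htrans
  push_neg at htrans
  obtain ⟨C, hCmc, hCdisj⟩ := htrans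
  have hCdisj' : ∀ x ∈ C, x ∉ ⋃₀ Q := by
    intro x hx hxQ
    exact (Set.not_nonempty_iff_eq_empty.2 rfl) (hCdisj ▸ (⟨x, hxQ, hx⟩ : (⋃₀ Q ∩ C).Nonempty))
  obtain ⟨hCco, hCmin⟩ := hCmc
  have hCsub : C ⊆ Set.Iio n := hCco.1
  have hvmQ : vm ∈ ⋃₀ Q := ⟨{vh, vm}, hdata.1, by simp⟩
  have hvpQ : vp ∈ ⋃₀ Q := ⟨{vh, vp}, hdata.2.1, by simp⟩
  have hvmn : vm ∈ Set.Iio n := (hQ.1 _ hdata.1).1 (by simp)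
  have hvpn : vp ∈ Set.Iio n := (hQ.1 _ hdata.2.1).1 (by simp)
  have hvmvp : vm ≠ vp := ne_of_lt hdata.2.2
  have hvmC : vm ∉ C := fun h => hCdisj' vm h hvmQ
  have hvpC : vp ∉ C := fun h => hCdisj' vp h hvpQ
  have hCne : C.Nonempty := by
    rcases hCco.2 with h | h
    · rcases Set.eq_empty_or_nonempty C with rfl | h'
      · exact absurd (Or.inl rfl) h.2
      · exact h'
    · rcases Set.eq_empty_or_nonempty C with rfl | h'
      · exact absurd (Or.inr (Or.inr (by rw [Set.diff_empty]))) h.2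
      · exact h'
  rcases hCco.2 with ⟨hAmod, hAnt⟩ | ⟨hBmod, hBnt⟩
  · -- Case A : C itself is a nontrivial module of underline(n)
    obtain ⟨a, ha⟩ := hCne
    have hb : ∃ b ∈ C, b ≠ a := by
      by_contra h
      push_neg at h
      refine hAnt (Or.inr (Or.inl ⟨a, ?_⟩))
      ext x
      simp only [Set.mem_singleton_iff]
      exact ⟨fun hx => h x hx, fun hx => hx ▸ ha⟩
    obtain ⟨b, hb, hba⟩ := hb
    have hModQ : IsModuleOn Q (Set.Iio n) C := by
      refine transferMod hAmod ?_
      intro v x _ _ hxC hmem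
      exact hCdisj' x hxC ⟨_, hmem, by simp⟩
    have han : a ∈ Set.Iio n := hCsub ha
    have hbn : b ∈ Set.Iio n := hCsub hb
    have havm : a ≠ vm := fun h => hvmC (h ▸ ha)
    have hbvm : b ≠ vm := fun h => hvmC (h ▸ hb)
    have havp : a ≠ vp := fun h => hvpC (h ▸ ha)
    have hbvp : b ≠ vp := fun h => hvpC (h ▸ hb)
    refine ⟨?_, ?_, ?_⟩
    · exact decompAux (subset_refl _) hModQ ⟨ha, han⟩ ⟨hb, hbn⟩ (Ne.symm hba) hvmn hvmC
    · exact decompAux Set.diff_subset hModQ ⟨ha, han, havm⟩ ⟨hb, hbn, hbvm⟩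
        (Ne.symm hba) ⟨hvpn, fun h => hvmvp (Set.mem_singleton_iff.1 h).symm⟩ hvpC
    · exact decompAux Set.diff_subset hModQ ⟨ha, han, havp⟩ ⟨hb, hbn, hbvp⟩
        (Ne.symm hba) ⟨hvmn, fun h => hvmvp (Set.mem_singleton_iff.1 h)⟩ hvmC
  · -- Case B : the complement of C is a nontrivial module of underline(n)
    have hcor : 0 ∈ C ∨ (n - 1) ∈ C := by
      by_contra h
      push_neg at h
      obtain ⟨v, hv⟩ := hCne
      have hvn : v ∈ Set.Iio n := hCsub hv
      have hvn' : v < n := hvn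
      rcases hBmod.2 v hvn (fun hd => hd.2 hv) with h1 | h1
      · have h2 := h1 0 ⟨by simp [Set.mem_Iio]; omega, h.1⟩
        rw [invArc_empty_iff] at h2
        omega
      · have h2 := h1 (n - 1) ⟨by simp [Set.mem_Iio]; omega, h.2⟩
        rw [invArc_empty_iff] at h2
        omega
    obtain ⟨c, hcC, hcor'⟩ : ∃ c, c ∈ C ∧ (c = 0 ∨ c = n - 1) := by
      rcases hcor with h | h
      · exact ⟨0, h, Or.inl rfl⟩
      · exact ⟨n - 1, h, Or.inr rfl⟩
    have hcIio : c ∈ Set.Iio n := hCsub hcC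
    have hcQ : c ∉ ⋃₀ Q := hCdisj' c hcC
    have hmodc : IsModuleOn (∅ : Set (Set ℕ)) (Set.Iio n) (Set.Iio n \ {c}) :=
      complMod hcIio hcor'
    have memM : ∀ a : ℕ, 1 ≤ a → a ≤ 3 → a ∈ Set.Iio n \ {c} := by
      intro a h1 h3
      refine ⟨by simp only [Set.mem_Iio]; omega, ?_⟩
      simp only [Set.mem_singleton_iff]
      have : c < n := hcIio
      rcases hcor' with rfl | rfl <;> omega
    have hntc : ¬ IsTrivialSubset (Set.Iio n) (Set.Iio n \ {c}) :=
      notTrivial (memM 1 le_rfl (by omega)) (memM 2 (by omega) (by omega)) (by omega)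
        hcIio (fun h => h.2 rfl)
    have hco : IsCoModuleOn (∅ : Set (Set ℕ)) (Set.Iio n) {c} :=
      ⟨Set.singleton_subset_iff.2 hcIio, Or.inr ⟨hmodc, hntc⟩⟩
    have hCeq : ({c} : Set ℕ) = C := hCmin {c} hco (Set.singleton_subset_iff.2 hcC)
    have hModQ : IsModuleOn Q (Set.Iio n) (Set.Iio n \ {c}) := by
      refine transferMod hmodc ?_
      intro v x hv hvM _ hmem
      have hvc : v = c := by
        by_contra h
        exact hvM ⟨hv, h⟩
      exact hcQ ⟨_, hvc ▸ hmem, by simp [hvc]⟩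
    have hcvm : c ≠ vm := fun h => hcQ (h ▸ hvmQ)
    have hcvp : c ≠ vp := fun h => hcQ (h ▸ hvpQ)
    have pick : ∀ v : ℕ, ∃ a b : ℕ, 1 ≤ a ∧ a ≤ 3 ∧ 1 ≤ b ∧ b ≤ 3 ∧ a ≠ b ∧ a ≠ v ∧ b ≠ v := by
      intro v
      by_cases h1 : v = 1
      · exact ⟨2, 3, by omega, by omega, by omega, by omega, by omega, by omega, by omega⟩
      · by_cases h2 : v = 2
        · exact ⟨1, 3, by omega, by omega, by omega, by omega, by omega, by omega, by omega⟩
        · exact ⟨1, 2, by omega, by omega, by omega, by omega, by omega, by omega, by omega⟩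
    refine ⟨?_, ?_, ?_⟩
    · obtain ⟨a, b, ha1, ha3, hb1, hb3, hab, _, _⟩ := pick 0
      exact decompAux (subset_refl _) hModQ ⟨memM a ha1 ha3, (memM a ha1 ha3).1⟩
        ⟨memM b hb1 hb3, (memM b hb1 hb3).1⟩ hab hcIio (fun h => h.2 rfl)
    · obtain ⟨a, b, ha1, ha3, hb1, hb3, hab, havm, hbvm⟩ := pick vm
      exact decompAux Set.diff_subset hModQ ⟨memM a ha1 ha3, (memM a ha1 ha3).1, havm⟩
        ⟨memM b hb1 hb3, (memM b hb1 hb3).1, hbvm⟩ hab ⟨hcIio, hcvm⟩ (fun h => h.2 rfl)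
    · obtain ⟨a, b, ha1, ha3, hb1, hb3, hab, havp, hbvp⟩ := pick vp
      exact decompAux Set.diff_subset hModQ ⟨memM a ha1 ha3, (memM a ha1 ha3).1, havp⟩
        ⟨memM b hb1 hb3, (memM b hb1 hb3).1, hbvp⟩ hab ⟨hcIio, hcvp⟩ (fun h => h.2 rfl)
end

section
/- Let n ≥ 3, let V = {0,1,…,n−1} with the natural order, and let Q be a partial quasi-pairing of V with v_Q^+ = v_Q^- + 1. Then {v_Q^-, v_Q^+} is a nontrivial module of Inv(underline(n), Q); in particular, Inv(underline(n), Q) is decomposable. -/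
open Set

/-! Since `v_Q^+ = v_Q^- + 1`, every other vertex lies below both or above both of them.
Counting shows that the blocks of `Q` other than `{v̂_Q, v_Q^-}` and `{v̂_Q, v_Q^+}` avoid
`{v̂_Q, v_Q^-, v_Q^+}`, so `v̂_Q` has both of its arcs to `{v_Q^-, v_Q^+}` reversed and every
other vertex neither; either way it sees `v_Q^-` and `v_Q^+` alike. -/

theorem Set.ncard_sUnion_le_mul {α : Type*} {F : Set (Set α)} (hF : F.Finite) {k : ℕ}
    (hk : ∀ B ∈ F, B.ncard ≤ k) : (⋃₀ F).ncard ≤ k * F.ncard := by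
  induction F, hF using Set.Finite.induction_on with
  | empty => simp
  | @insert B F hBF hF ih =>
    rw [sUnion_insert, ncard_insert_of_notMem hBF hF, mul_add_one]
    calc (B ∪ ⋃₀ F).ncard ≤ B.ncard + (⋃₀ F).ncard := ncard_union_le _ _
      _ ≤ k + k * F.ncard :=
        add_le_add (hk B (mem_insert _ _)) (ih fun C hC => hk C (mem_insert_of_mem _ hC))
      _ = k * F.ncard + k := add_comm _ _

section Tournament

variable {α : Type*} [LinearOrder α] {P : Set (Set α)}

theorem invArc_or_invArc {x y : α} (hxy : x ≠ y) : InvArc P x y ∨ InvArc P y x := by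
  unfold InvArc
  rw [pair_comm y x]
  rcases hxy.lt_or_gt with h | h <;> by_cases hP : ({x, y} : Set α) ∈ P <;> simp [h, hP]

theorem invArc_iff_of_lt_iff {v a b : α} (hva : v ≠ a) (hvb : v ≠ b) (hlt : v < a ↔ v < b)
    (hP : ({v, a} : Set α) ∈ P ↔ ({v, b} : Set α) ∈ P) :
    (InvArc P v a ↔ InvArc P v b) ∧ (InvArc P a v ↔ InvArc P b v) := by
  have hgt : a < v ↔ b < v := by
    rw [← not_le, ← not_le, le_iff_lt_or_eq, le_iff_lt_or_eq, hlt]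
    simp [hva, hvb]
  simp only [InvArc, pair_comm a v, pair_comm b v, hlt, hgt, hP, and_self]

theorem isModuleOn_pair_of_covBy {W : Set α} {a b : α} (hab : a ⋖ b) (ha : a ∈ W) (hb : b ∈ W)
    (hP : ∀ v ∈ W, v ≠ a → v ≠ b → (({v, a} : Set α) ∈ P ↔ ({v, b} : Set α) ∈ P)) :
    IsModuleOn P W {a, b} := by
  refine ⟨pair_subset ha hb, fun v hv hvab => ?_⟩
  simp only [mem_insert_iff, mem_singleton_iff, not_or] at hvab
  obtain ⟨hva, hvb⟩ := hvab
  have hlt : v < a ↔ v < b :=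
    ⟨fun h => h.trans hab.lt, fun h => (hab.le_of_lt h).lt_of_ne hva⟩
  obtain ⟨hto, hfrom⟩ := invArc_iff_of_lt_iff hva hvb hlt (hP v hv hva hvb)
  simp only [forall_mem_insert, mem_singleton_iff, forall_eq]
  rcases invArc_or_invArc (P := P) hva with h | h
  · exact Or.inl ⟨h, hto.1 h⟩
  · exact Or.inr ⟨h, hfrom.1 h⟩

end Tournament

theorem not_isTrivialSubset_of_ncard_eq_two {α : Type*} {W M : Set α} (hM : M.ncard = 2)
    (hW : 2 < W.ncard) : ¬ IsTrivialSubset W M := by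
  rintro (rfl | ⟨a, rfl⟩ | rfl) <;> simp_all

namespace IsPartialQuasiPairingOn

variable {α : Type*} [LinearOrder α] {V : Set α} {Q : Set (Set α)} {vh vm vp : α}

/-- `m - 1` blocks cover at most `2m - 2` points, so the remaining blocks can meet none of the
three points of `{vh, vm, vp}` if all `2m + 1` points are to be covered. -/
theorem disjoint_sUnion_diff_of_qpData (hQ : IsPartialQuasiPairingOn V Q)
    (hd : QPData Q vh vm vp) :
    Disjoint (⋃₀ (Q \ {{vh, vm}, {vh, vp}})) {vh, vm, vp} := by
  obtain ⟨hblocks, m, hm, hcover, hcard⟩ := hQ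
  obtain ⟨hm_mem, hp_mem, hmp⟩ := hd
  have hhm : vh ≠ vm := by rintro rfl; simpa using (hblocks _ hm_mem).2
  have hhp : vh ≠ vp := by rintro rfl; simpa using (hblocks _ hp_mem).2
  have hpair : ({vh, vm} : Set α) ≠ {vh, vp} := by simp [pair_eq_pair_iff, hmp.ne, hhm.symm]
  have hsub : {{vh, vm}, {vh, vp}} ⊆ Q := pair_subset hm_mem hp_mem
  have hQfin : Q.Finite := finite_of_ncard_ne_zero (by omega)
  have hrest_fin : (⋃₀ (Q \ {{vh, vm}, {vh, vp}})).Finite :=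
    (finite_of_ncard_ne_zero (by omega)).subset (sUnion_mono sdiff_subset)
  have hrest : (⋃₀ (Q \ {{vh, vm}, {vh, vp}})).ncard ≤ 2 * (m - 1) :=
    calc _ ≤ 2 * (Q \ {{vh, vm}, {vh, vp}}).ncard :=
          ncard_sUnion_le_mul hQfin.sdiff fun B hB => (hblocks B hB.1).2.le
      _ = 2 * (m - 1) := by rw [ncard_sdiff hsub, ncard_pair hpair, hcard]; rfl
  have hunion : ⋃₀ Q = ⋃₀ (Q \ {{vh, vm}, {vh, vp}}) ∪ {vh, vm, vp} := by
    conv_lhs => rw [← sdiff_union_of_subset hsub]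
    rw [sUnion_union, sUnion_pair]
    ext x
    simp only [mem_union, mem_insert_iff, mem_singleton_iff]
    tauto
  have hcount := ncard_union_add_ncard_inter _ _ hrest_fin (toFinite {vh, vm, vp})
  rw [← hunion, hcover, ncard_eq_three.mpr ⟨vh, vm, vp, hhm, hhp, hmp.ne, rfl⟩] at hcount
  rw [disjoint_iff_inter_eq_empty, ← ncard_eq_zero (hrest_fin.inter_of_left _)]
  omega

theorem pair_mem_iff_eq_of_qpData (hQ : IsPartialQuasiPairingOn V Q) (hd : QPData Q vh vm vp)
    {v w : α} (hw : w = vm ∨ w = vp) (hvm : v ≠ vm) (hvp : v ≠ vp) :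
    ({v, w} : Set α) ∈ Q ↔ v = vh := by
  refine ⟨fun hvw => ?_, ?_⟩
  · by_contra hvh
    have hother : ({v, w} : Set α) ∈ Q \ {{vh, vm}, {vh, vp}} := by
      simp [hvw, pair_eq_pair_iff, hvh, hvm, hvp]
    refine (hQ.disjoint_sUnion_diff_of_qpData hd).ne_of_mem
      (mem_sUnion_of_mem (mem_insert_of_mem v (mem_singleton w)) hother) (b := w) ?_ rfl
    rcases hw with rfl | rfl <;> simp
  · rintro rfl
    rcases hw with rfl | rfl
    exacts [hd.1, hd.2.1]

end IsPartialQuasiPairingOn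

/-- Let `n ≥ 3`, `V = {0, …, n−1}`, and `Q` a partial quasi-pairing of
`V` with distinguished data `(vh, vm, vp)` such that `v_Q^+ = v_Q^- + 1`. Then
`{v_Q^-, v_Q^+}` is a nontrivial module of `Inv(underline(n), Q)`; in particular,
`Inv(underline(n), Q)` is decomposable. -/
theorem stmt_14 (n : ℕ) (hn : 3 ≤ n) (Q : Set (Set ℕ))
    (hQ : IsPartialQuasiPairingOn (Set.Iio n) Q)
    (vh vm vp : ℕ) (hdata : QPData Q vh vm vp) (h : vp = vm + 1) :
    IsNontrivialModuleOn Q (Set.Iio n) {vm, vp} ∧ DecomposableOn Q (Set.Iio n) := by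
  have hvm : vm ∈ Iio n := (hQ.1 _ hdata.1).1 (mem_insert_of_mem _ rfl)
  have hvp : vp ∈ Iio n := (hQ.1 _ hdata.2.1).1 (mem_insert_of_mem _ rfl)
  have hmodule : IsModuleOn Q (Iio n) {vm, vp} :=
    isModuleOn_pair_of_covBy (h ▸ Order.covBy_add_one vm) hvm hvp fun v _ hv_m hv_p => by
      rw [hQ.pair_mem_iff_eq_of_qpData hdata (Or.inl rfl) hv_m hv_p,
        hQ.pair_mem_iff_eq_of_qpData hdata (Or.inr rfl) hv_m hv_p]
  have hnontrivial : IsNontrivialModuleOn Q (Iio n) {vm, vp} :=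
    ⟨hmodule, not_isTrivialSubset_of_ncard_eq_two (ncard_pair hdata.2.2.ne)
      (by rw [ncard_Iio_nat]; omega)⟩
  exact ⟨hnontrivial, _, hnontrivial⟩
end

section
/- Let n ≥ 3, let V = {0,1,…,n−1} with the natural order, and let Q be a partial quasi-pairing of V. If there exists v ∈ V such that {v, v+1} ∈ Q and v̂_Q ∉ {v, v+1}, then {v, v+1} is a nontrivial module of Inv(underline(n), Q); in particular, Inv(underline(n), Q) is decomposable. -/
open Set

/-! Every point of a quasi-pairing `Q` other than `v̂_Q` lies in a single block: the block sizes
of `Q` sum to `2(m+1)`, one more than the number `2m+1` of covered points, so by double counting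
only one point can lie in two blocks. Hence no block of `Q` joins `v` or `v+1` to a vertex outside
`{v, v+1}`, so between `{v, v+1}` and the other vertices `Inv(underline(n), Q)` agrees with the
transitive tournament, in which the interval `{v, v+1}` is a module. -/

open scoped Finset

section DoubleCounting

variable {α : Type*} {Q : Set (Set α)}

open Classical in
theorem sum_ncard_eq_sum_card_filter_mem (hQ : Q.Finite) (hU : (⋃₀ Q).Finite) :
    ∑ B ∈ hQ.toFinset, B.ncard = ∑ z ∈ hU.toFinset, #{B ∈ hQ.toFinset | z ∈ B} := by
  calc ∑ B ∈ hQ.toFinset, B.ncard = ∑ B ∈ hQ.toFinset, #{z ∈ hU.toFinset | z ∈ B} := by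
        refine Finset.sum_congr rfl fun B hB => ?_
        rw [← Set.ncard_coe_finset]
        congr 1
        ext z
        simp only [Finset.coe_filter, Set.Finite.mem_toFinset, Set.mem_ofPred_eq]
        exact (and_iff_right_of_imp fun hz => ⟨B, (Set.Finite.mem_toFinset hQ).1 hB, hz⟩).symm
    _ = _ := by
        simp only [Finset.card_filter]
        exact Finset.sum_comm

theorem eq_of_mem_two_blocks (h2 : ∀ B ∈ Q, B.ncard = 2)
    (hcard : (⋃₀ Q).ncard + 1 = 2 * Q.ncard) {x y : α} {B C B' C' : Set α}
    (hB : B ∈ Q) (hC : C ∈ Q) (hBC : B ≠ C) (hxB : x ∈ B) (hxC : x ∈ C)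
    (hB' : B' ∈ Q) (hC' : C' ∈ Q) (hBC' : B' ≠ C') (hyB' : y ∈ B') (hyC' : y ∈ C') :
    x = y := by
  classical
  by_contra hxy
  have hQ : Q.Finite := Set.finite_of_ncard_ne_zero (by omega)
  have hU : (⋃₀ Q).Finite := Set.finite_of_ncard_ne_zero (by omega)
  set deg : α → ℕ := fun z => #{D ∈ hQ.toFinset | z ∈ D}
  have hdeg_pos : ∀ z ∈ hU.toFinset, 0 < deg z := by
    intro z hz
    obtain ⟨D, hD, hzD⟩ := (Set.Finite.mem_toFinset hU).1 hz
    exact Finset.card_pos.2 ⟨D, Finset.mem_filter.2 ⟨(Set.Finite.mem_toFinset hQ).2 hD, hzD⟩⟩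
  have hdeg_two : ∀ {z D E}, D ∈ Q → E ∈ Q → D ≠ E → z ∈ D → z ∈ E → 1 < deg z :=
    fun hD hE hDE hzD hzE => Finset.one_lt_card.2
      ⟨_, Finset.mem_filter.2 ⟨(Set.Finite.mem_toFinset hQ).2 hD, hzD⟩,
        _, Finset.mem_filter.2 ⟨(Set.Finite.mem_toFinset hQ).2 hE, hzE⟩, hDE⟩
  have hxU : x ∈ hU.toFinset := (Set.Finite.mem_toFinset hU).2 ⟨B, hB, hxB⟩
  have hyU : y ∈ hU.toFinset := (Set.Finite.mem_toFinset hU).2 ⟨B', hB', hyB'⟩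
  have hexcess : 2 ≤ ∑ z ∈ hU.toFinset, (deg z - 1) := by
    have := Finset.add_le_sum (f := fun z => deg z - 1) (fun _ _ => Nat.zero_le _) hxU hyU hxy
    have := hdeg_two hB hC hBC hxB hxC
    have := hdeg_two hB' hC' hBC' hyB' hyC'
    omega
  have hsum : ∑ z ∈ hU.toFinset, deg z = ∑ z ∈ hU.toFinset, (deg z - 1) + (⋃₀ Q).ncard := by
    rw [Set.ncard_eq_toFinset_card _ hU, Finset.card_eq_sum_ones, ← Finset.sum_add_distrib]
    exact Finset.sum_congr rfl fun z hz => (Nat.sub_add_cancel (hdeg_pos z hz)).symm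
  have htotal : ∑ D ∈ hQ.toFinset, D.ncard = 2 * Q.ncard := by
    rw [Finset.sum_congr rfl fun D hD => h2 D ((Set.Finite.mem_toFinset hQ).1 hD),
      Finset.sum_const, smul_eq_mul, Set.ncard_eq_toFinset_card _ hQ, mul_comm]
  have hdouble : ∑ D ∈ hQ.toFinset, D.ncard = ∑ z ∈ hU.toFinset, deg z :=
    sum_ncard_eq_sum_card_filter_mem hQ hU
  omega

end DoubleCounting

section QuasiPairing

variable {α : Type*} [LinearOrder α] {W : Set α} {Q : Set (Set α)}

theorem IsPartialQuasiPairingOn.eq_of_mem_of_ne (hQ : IsPartialQuasiPairingOn W Q)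
    {vh vm vp : α} (hdata : QPData Q vh vm vp) {x : α} (hx : x ≠ vh) {B C : Set α} (hB : B ∈ Q)
    (hC : C ∈ Q) (hxB : x ∈ B) (hxC : x ∈ C) : B = C := by
  obtain ⟨hblocks, m, -, hU, hcard⟩ := hQ
  obtain ⟨hm, hp, hmp⟩ := hdata
  have hmp' : ({vh, vm} : Set α) ≠ {vh, vp} := by
    rw [Ne, Set.pair_eq_pair_iff]
    rintro (⟨-, h⟩ | ⟨h, h'⟩)
    · exact hmp.ne h
    · exact hmp.ne (h' ▸ h)
  by_contra hBC
  exact hx (eq_of_mem_two_blocks (fun D hD => (hblocks D hD).2) (by omega)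
    hB hC hBC hxB hxC hm hp hmp' (by simp) (by simp))

theorem IsPartialQuasiPairingOn.pair_notMem (hQ : IsPartialQuasiPairingOn W Q)
    {vh vm vp : α} (hdata : QPData Q vh vm vp) {x w : α} (hx : x ≠ vh) {B : Set α} (hB : B ∈ Q)
    (hxB : x ∈ B) (hw : w ∉ B) : ({w, x} : Set α) ∉ Q := fun h =>
  hw (hQ.eq_of_mem_of_ne hdata hx h hB (by simp) hxB ▸ by simp)

end QuasiPairing

theorem isModuleOn_of_isIntervalOf {α : Type*} [LinearOrder α] {P : Set (Set α)} {W M : Set α}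
    (hM : IsIntervalOf W M) (hP : ∀ w ∈ W, w ∉ M → ∀ x ∈ M, ({w, x} : Set α) ∉ P) :
    IsModuleOn P W M :=
  ⟨hM.1, fun w hw hwM => (hM.2 w ⟨hw, hwM⟩).imp
    (fun hlt x hx => Or.inl ⟨hlt x hx, hP w hw hwM x hx⟩)
    (fun hgt x hx => Or.inl ⟨hgt x hx, Set.pair_comm w x ▸ hP w hw hwM x hx⟩)⟩

theorem not_isTrivialSubset_pair {α : Type*} {W : Set α} {a b c : α} (hab : a ≠ b) (hc : c ∈ W)
    (hca : c ≠ a) (hcb : c ≠ b) : ¬ IsTrivialSubset W {a, b} := by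
  rintro (h | ⟨d, h⟩ | h)
  · exact (Set.insert_nonempty a {b}).ne_empty h
  · have ha : a ∈ ({d} : Set α) := h ▸ mem_insert a {b}
    have hb : b ∈ ({d} : Set α) := h ▸ mem_insert_of_mem a rfl
    exact hab (ha.trans hb.symm)
  · rcases h ▸ hc with rfl | rfl
    exacts [hca rfl, hcb rfl]

theorem isIntervalOf_Iio_pair {n v : ℕ} (hv : v + 1 < n) : IsIntervalOf (Iio n) {v, v + 1} := by
  refine ⟨?_, fun w hw => ?_⟩
  · rintro x (rfl | rfl) <;> simp only [mem_Iio] <;> omega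
  · simp only [mem_sdiff, mem_insert_iff, mem_singleton_iff, not_or] at hw
    rcases lt_or_gt_of_ne hw.2.1 with h | h
    · exact Or.inl (by rintro x (rfl | rfl) <;> omega)
    · exact Or.inr (by rintro x (rfl | rfl) <;> omega)

theorem stmt_16_general (n : ℕ) (hn : 3 ≤ n) (Q : Set (Set ℕ))
    (hQ : IsPartialQuasiPairingOn (Set.Iio n) Q)
    (vh vm vp : ℕ) (hdata : QPData Q vh vm vp)
    (v : ℕ) (h1 : ({v, v + 1} : Set ℕ) ∈ Q)
    (h2 : vh ≠ v ∧ vh ≠ v + 1) :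
    IsNontrivialModuleOn Q (Set.Iio n) {v, v + 1} ∧ DecomposableOn Q (Set.Iio n) := by
  have hv1 : v + 1 < n := (hQ.1 _ h1).1 (by simp)
  have hmod : IsModuleOn Q (Iio n) {v, v + 1} :=
    isModuleOn_of_isIntervalOf (isIntervalOf_Iio_pair hv1) fun w _ hw x hx =>
      hQ.pair_notMem hdata (by rcases hx with rfl | rfl; exacts [h2.1.symm, h2.2.symm]) h1 hx hw
  obtain ⟨c, hc, hcv, hcv1⟩ : ∃ c < n, c ≠ v ∧ c ≠ v + 1 := by
    rcases Nat.eq_zero_or_pos v with rfl | hv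
    exacts [⟨2, by omega, by omega, by omega⟩, ⟨0, by omega, by omega, by omega⟩]
  have hnt := not_isTrivialSubset_pair (W := Iio n) (by omega : v ≠ v + 1) hc hcv hcv1
  exact ⟨⟨hmod, hnt⟩, _, hmod, hnt⟩

/-- Let `n ≥ 3`, `V = {0, …, n−1}`, and `Q` a partial quasi-pairing of
`V` with distinguished data `(vh, vm, vp)`. If there is `v ∈ V` with `{v, v+1} ∈ Q` and
`v̂_Q ∉ {v, v+1}`, then `{v, v+1}` is a nontrivial module of `Inv(underline(n), Q)`;
in particular, `Inv(underline(n), Q)` is decomposable. -/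
theorem stmt_16 (n : ℕ) (hn : 3 ≤ n) (Q : Set (Set ℕ))
    (hQ : IsPartialQuasiPairingOn (Set.Iio n) Q)
    (vh vm vp : ℕ) (hdata : QPData Q vh vm vp)
    (v : ℕ) (hv : v < n) (h1 : ({v, v + 1} : Set ℕ) ∈ Q)
    (h2 : vh ≠ v ∧ vh ≠ v + 1) :
    IsNontrivialModuleOn Q (Set.Iio n) {v, v + 1} ∧ DecomposableOn Q (Set.Iio n) :=
  stmt_16_general n hn Q hQ vh vm vp hdata v h1 h2
end

section
/- Let n ≥ 3, let V = {0,1,…,n−1} with the natural order, and let Q be a partial quasi-pairing of V. If {0, 1} ∈ Q and v̂_Q = 0, then V ∖ {1} is a nontrivial module of Inv(underline(n), Q); in particular, Inv(underline(n), Q) is decomposable. -/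
/-!
A quasi-pairing has `m + 1` two-element blocks covering `2m + 1` points, so the overlaps of its
blocks cost exactly one point. If two distinct blocks `B`, `C` both met the union of the other
blocks, that union would have at most `2(m - 1)` points and adding `B` and `C` would bring at
most one new point each, leaving `⋃ Q` with at most `2m` points. Since `v̂_Q = 0`, the blocks
`{0, v_Q^-}` and `{0, 1}` contain `0` and `1`, so no block `{1, x}` with `x ≥ 2` can sit next to
`{0, v_Q^+}`. Hence the only reversed arc at `1` is `(0, 1)`: the vertex `1` dominates all others
and `V ∖ {1}` is a module.
-/

open Set

namespace Set

theorem ncard_sUnion_le_mul_s18 {α : Type*} {S : Set (Set α)} (hS : S.Finite) {k : ℕ}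
    (hk : ∀ B ∈ S, B.ncard ≤ k) : (⋃₀ S).ncard ≤ k * S.ncard := by
  induction S, hS using Set.Finite.induction_on with
  | empty => simp
  | @insert B S hBS hS ih =>
    rw [sUnion_insert, ncard_insert_of_notMem hBS hS, mul_add_one]
    have hB := hk B (mem_insert B S)
    have hrest := ih fun C hC => hk C (mem_insert_of_mem B hC)
    calc (B ∪ ⋃₀ S).ncard ≤ B.ncard + (⋃₀ S).ncard := ncard_union_le _ _
      _ ≤ k * S.ncard + k := by omega

theorem ncard_union_add_one_le {α : Type*} {X B : Set α} (hX : X.Finite) (hB : B.Finite)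
    (h : (X ∩ B).Nonempty) : (X ∪ B).ncard + 1 ≤ X.ncard + B.ncard := by
  rw [← ncard_union_add_ncard_inter X B hX hB]
  exact Nat.add_le_add_left ((ncard_pos (hX.inter_of_left B)).2 h) _

theorem ncard_sUnion_add_two_le {α : Type*} {Q : Set (Set α)} (hQ : Q.Finite)
    (hQ2 : ∀ B ∈ Q, B.ncard = 2) {B C : Set α} (hB : B ∈ Q) (hC : C ∈ Q) (hBC : B ≠ C)
    (hBR : (⋃₀ (Q \ {B, C}) ∩ B).Nonempty) (hCR : (⋃₀ (Q \ {B, C}) ∩ C).Nonempty) :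
    (⋃₀ Q).ncard + 2 ≤ 2 * Q.ncard := by
  set R := Q \ {B, C}
  have hBC_sub : ({B, C} : Set (Set α)) ⊆ Q := pair_subset hB hC
  have hfin : ∀ D ∈ Q, D.Finite := fun D hD => finite_of_ncard_pos (by rw [hQ2 D hD]; omega)
  have hRfin : (⋃₀ R).Finite := (hQ.subset sdiff_subset).sUnion fun D hD => hfin D hD.1
  have hQR : ⋃₀ Q = ⋃₀ R ∪ B ∪ C := by
    rw [← sdiff_union_of_subset hBC_sub, sUnion_union, sUnion_pair, union_assoc]
  have hRcard : R.ncard + 2 = Q.ncard := by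
    rw [← ncard_pair hBC]; exact ncard_sdiff_add_ncard_of_subset hBC_sub hQ
  have hR : (⋃₀ R).ncard ≤ 2 * R.ncard :=
    ncard_sUnion_le_mul_s18 (hQ.subset sdiff_subset) fun D hD => (hQ2 D hD.1).le
  have hRB := ncard_union_add_one_le hRfin (hfin B hB) hBR
  have hRBC := ncard_union_add_one_le (hRfin.union (hfin B hB)) (hfin C hC)
    (hCR.mono (inter_subset_inter_left C subset_union_left))
  rw [hQR]
  have := hQ2 B hB
  have := hQ2 C hC
  omega

end Set

theorem IsPartialQuasiPairingOn.disjoint_sUnion_diff_pair {α : Type*} {V : Set α}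
    {Q : Set (Set α)} (hQ : IsPartialQuasiPairingOn V Q) {B C : Set α} (hB : B ∈ Q) (hC : C ∈ Q)
    (hBC : B ≠ C) :
    Disjoint (⋃₀ (Q \ {B, C})) B ∨ Disjoint (⋃₀ (Q \ {B, C})) C := by
  obtain ⟨hblocks, m, -, hU, hQm⟩ := hQ
  by_contra! h
  simp only [not_disjoint_iff_nonempty_inter] at h
  have := ncard_sUnion_add_two_le (finite_of_ncard_pos (by omega)) (fun D hD => (hblocks D hD).2)
    hB hC hBC h.1 h.2
  omega

theorem pair_one_notMem {V : Set ℕ} {Q : Set (Set ℕ)} (hQ : IsPartialQuasiPairingOn V Q)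
    {vm vp : ℕ} (hdata : QPData Q 0 vm vp) (h01 : ({0, 1} : Set ℕ) ∈ Q) {x : ℕ} (hx : 2 ≤ x) :
    ({1, x} : Set ℕ) ∉ Q := by
  intro h1x
  obtain ⟨hvm, hvp, hlt⟩ := hdata
  have hvp1 : vp ≠ 1 := by
    rintro rfl
    obtain rfl : vm = 0 := by omega
    simpa using (hQ.1 _ hvm).2
  have hne : ({0, vp} : Set ℕ) ≠ {1, x} := by
    simp only [ne_eq, pair_eq_pair_iff]
    omega
  have h0 : (0 : ℕ) ∈ ⋃₀ (Q \ {{0, vp}, {1, x}}) := by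
    refine ⟨{0, vm}, ⟨hvm, ?_⟩, mem_insert 0 {vm}⟩
    simp only [mem_insert_iff, mem_singleton_iff, pair_eq_pair_iff]
    omega
  have h1 : (1 : ℕ) ∈ ⋃₀ (Q \ {{0, vp}, {1, x}}) := by
    refine ⟨{0, 1}, ⟨h01, ?_⟩, mem_insert_of_mem 0 rfl⟩
    simp only [mem_insert_iff, mem_singleton_iff, pair_eq_pair_iff]
    omega
  rcases hQ.disjoint_sUnion_diff_pair hvp h1x hne with h | h
  · exact disjoint_left.1 h h0 (mem_insert 0 {vp})
  · exact disjoint_left.1 h h1 (mem_insert 1 {x})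

theorem invArc_one {V : Set ℕ} {Q : Set (Set ℕ)} (hQ : IsPartialQuasiPairingOn V Q)
    {vm vp : ℕ} (hdata : QPData Q 0 vm vp) (h01 : ({0, 1} : Set ℕ) ∈ Q) {x : ℕ} (hx : x ≠ 1) :
    InvArc Q 1 x := by
  rcases Nat.lt_or_ge x 2 with hx2 | hx2
  · obtain rfl : x = 0 := by omega
    exact Or.inr ⟨zero_lt_one, pair_comm 1 0 ▸ h01⟩
  · exact Or.inl ⟨by omega, pair_one_notMem hQ hdata h01 hx2⟩

theorem isModuleOn_diff_singleton {α : Type*} [LinearOrder α] {P : Set (Set α)} {W : Set α}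
    {v : α} (hv : ∀ x ∈ W \ {v}, InvArc P v x) : IsModuleOn P W (W \ {v}) := by
  refine ⟨sdiff_subset, fun u hu huM => Or.inl ?_⟩
  obtain rfl : u = v := by simpa [hu] using huM
  exact hv

theorem not_isTrivialSubset_diff_singleton {α : Type*} {W : Set α} {v : α} (hv : v ∈ W)
    (hW : (W \ {v}).Nontrivial) : ¬ IsTrivialSubset W (W \ {v}) := by
  rintro (h | ⟨a, h⟩ | h)
  · exact hW.nonempty.ne_empty h
  · exact hW.ne_singleton h
  · exact (h.symm ▸ hv : v ∈ W \ {v}).2 rfl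

/-- Let `n ≥ 3`, `V = {0, …, n−1}`, and `Q` a partial quasi-pairing of
`V` with distinguished data `(vh, vm, vp)`. If `{0, 1} ∈ Q` and `v̂_Q = 0`, then
`V ∖ {1}` is a nontrivial module of `Inv(underline(n), Q)`; in particular,
`Inv(underline(n), Q)` is decomposable. -/
theorem stmt_18 (n : ℕ) (hn : 3 ≤ n) (Q : Set (Set ℕ))
    (hQ : IsPartialQuasiPairingOn (Set.Iio n) Q)
    (vh vm vp : ℕ) (hdata : QPData Q vh vm vp)
    (h1 : ({0, 1} : Set ℕ) ∈ Q) (h2 : vh = 0) :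
    IsNontrivialModuleOn Q (Set.Iio n) (Set.Iio n \ {1}) ∧
      DecomposableOn Q (Set.Iio n) := by
  subst h2
  have hmod : IsNontrivialModuleOn Q (Iio n) (Iio n \ {1}) :=
    ⟨isModuleOn_diff_singleton fun x hx => invArc_one hQ hdata h1 hx.2,
      not_isTrivialSubset_diff_singleton (by simp; omega)
        ⟨0, by simp; omega, 2, by simp; omega, by norm_num⟩⟩
  exact ⟨hmod, _, hmod⟩
end
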